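/- arXiv:quant-ph/9703009 — 7 statements merged into one kernel-verified Lean document; each statement's English description precedes it below -/
import Mathlib

section
/- A pebble configuration with f free pebbles and n-f placed pebbles is realizable (reachable from the empty configuration by the reversible pebble game rules) if and only if its placed pebbles can be numbered f, f+1, ..., n-1 such that pebble i has a higher-numbered pebble (or the fixed pebble at node 0) at most 2^i positions to its left. -/
/-- A move of the reversible pebble game with `n` movable pebbles. Configurations
are the sets of occupied nodes, always containing node `0` (the fixed pebble), so
a configuration `C` has `C.card - 1` placed movable pebbles. One may place a free
pebble on unoccupied node `i+1` when node `i` is occupied (requiring a free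
pebble, i.e. `C.card ≤ n`), or remove the pebble from node `i+1` when node `i`
is occupied. -/
def Move (n : ℕ) (C C' : Finset ℕ) : Prop :=
  (∃ i ∈ C, i + 1 ∉ C ∧ C.card ≤ n ∧ C' = insert (i + 1) C) ∨
  (∃ i ∈ C, i + 1 ∈ C ∧ C' = C.erase (i + 1))

/-- Reachable from the all-free initial configuration by legal moves. -/
def Realizable (n : ℕ) (C : Finset ℕ) : Prop :=
  Relation.ReflTransGen (Move n) {0} C

/-- The placed pebbles (on nodes `≥ 1`) can be numbered `f, f+1, …, n-1` such
that pebble `i` has a higher-numbered pebble (or the fixed pebble at node `0`)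
at most `2 ^ i` positions to its left. -/
def GoodNumbering (f n : ℕ) (P : Finset ℕ) : Prop :=
  ∃ p : ℕ → ℕ, Set.InjOn p (Set.Ico f n) ∧ (P : Set ℕ) = p '' Set.Ico f n ∧
    ∀ i ∈ Set.Ico f n, ∃ q,
      (q = 0 ∨ ∃ j ∈ Set.Ico f n, i < j ∧ p j = q) ∧ q < p i ∧ p i ≤ q + 2 ^ i

lemma lemA (n : ℕ) : ∀ (k : ℕ), ∀ (C : Finset ℕ) (a d : ℕ), a ∈ C → 0 < d → d ≤ 2 ^ k →
    (∀ x, a < x → x ≤ a + d → x ∉ C) → C.card + k + 1 ≤ n + 1 →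
    Relation.ReflTransGen (Move n) C (insert (a + d) C) ∧
    Relation.ReflTransGen (Move n) (insert (a + d) C) C := by
  intro k
  induction k with
  | zero =>
    intro C a d ha hd hdle hemp hcard
    have hd1 : d = 1 := by simpa using Nat.le_antisymm hdle hd
    subst hd1
    have hnot : a + 1 ∉ C := hemp (a + 1) (by omega) (by omega)
    constructor
    · exact Relation.ReflTransGen.single
        (Or.inl ⟨a, ha, hnot, by omega, rfl⟩)
    · refine Relation.ReflTransGen.single (Or.inr ⟨a, ?_, ?_, ?_⟩)
      · exact Finset.mem_insert_of_mem ha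
      · exact Finset.mem_insert_self _ _
      · rw [Finset.erase_insert hnot]
  | succ k IH =>
    intro C a d ha hd hdle hemp hcard
    by_cases hsmall : d ≤ 2 ^ k
    · exact IH C a d ha hd hsmall hemp (by omega)
    · have hpow : 2 ^ (k + 1) = 2 ^ k + 2 ^ k := by rw [pow_succ]; omega
      set d2 := d - 2 ^ k with hd2
      have hd2pos : 0 < d2 := by omega
      have hd2le : d2 ≤ 2 ^ k := by omega
      have hd1led : 2 ^ k ≤ d := by omega
      have hd1lt : 2 ^ k < d := by omega
      have h1 := IH C a (2 ^ k) ha (by positivity) le_rfl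
        (fun x hx1 hx2 => hemp x hx1 (by omega)) (by omega)
      have hnm1 : a + 2 ^ k ∉ C := hemp _ (by omega) (by omega)
      have hnm2 : a + d ∉ C := hemp _ (by omega) (by omega)
      have hcard1 : (insert (a + 2 ^ k) C).card = C.card + 1 :=
        Finset.card_insert_of_notMem hnm1
      have h2 := IH (insert (a + 2 ^ k) C) (a + 2 ^ k) d2
        (Finset.mem_insert_self _ _) hd2pos hd2le
        (by
          intro x hx1 hx2
          simp only [Finset.mem_insert, not_or]
          exact ⟨by omega, hemp x (by omega) (by omega)⟩)
        (by omega)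
      have hsum : a + 2 ^ k + d2 = a + d := by omega
      rw [hsum] at h2
      have hcard2 : (insert (a + d) C).card = C.card + 1 :=
        Finset.card_insert_of_notMem hnm2
      have h3 := IH (insert (a + d) C) a (2 ^ k)
        (Finset.mem_insert_of_mem ha) (by positivity) le_rfl
        (by
          intro x hx1 hx2
          simp only [Finset.mem_insert, not_or]
          exact ⟨by omega, hemp x (by omega) (by omega)⟩)
        (by omega)
      have hcomm : insert (a + 2 ^ k) (insert (a + d) C)
          = insert (a + d) (insert (a + 2 ^ k) C) := Finset.insert_comm _ _ _
      rw [hcomm] at h3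
      exact ⟨h1.1.trans (h2.1.trans h3.2), h3.1.trans (h2.2.trans h1.2)⟩

lemma place_good (f n x : ℕ) (P : Finset ℕ) (hf : 1 ≤ f) (hfn : f ≤ n)
    (hx : x ∉ P) (b : ℕ) (hb : b = 0 ∨ b ∈ P) (hbx : b + 1 = x)
    (hg : GoodNumbering f n P) : GoodNumbering (f - 1) n (insert x P) := by
  obtain ⟨p, hinj, himg, hwit⟩ := hg
  set p' := Function.update p (f - 1) x with hp'
  have hne : ∀ j, j ∈ Set.Ico f n → j ≠ f - 1 := by
    intro j hj; simp only [Set.mem_Ico] at hj; omega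
  have hval : ∀ j, j ∈ Set.Ico f n → p' j = p j := by
    intro j hj; exact Function.update_of_ne (hne j hj) _ _
  have hvalx : p' (f - 1) = x := Function.update_self _ _ _
  have hxim : x ∉ p '' Set.Ico f n := by
    rw [← himg]; simpa using hx
  have hIco : Set.Ico (f - 1) n = insert (f - 1) (Set.Ico f n) := by
    ext y; simp only [Set.mem_Ico, Set.mem_insert_iff]; omega
  have hlift : ∀ j, j ∈ Set.Ico f n → j ∈ Set.Ico (f - 1) n := by
    intro j hj; simp only [Set.mem_Ico] at *; omega
  refine ⟨p', ?_, ?_, ?_⟩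
  · intro a ha b2 hb2 hab
    rw [hIco] at ha hb2
    rcases ha with ha | ha <;> rcases hb2 with hb2 | hb2
    · rw [ha, hb2]
    · rw [ha, hvalx, hval b2 hb2] at hab
      exact absurd ⟨b2, hb2, hab.symm⟩ hxim
    · rw [hb2, hvalx, hval a ha] at hab
      exact absurd ⟨a, ha, hab⟩ hxim
    · rw [hval a ha, hval b2 hb2] at hab
      exact hinj ha hb2 hab
  · rw [Finset.coe_insert, himg, hIco, Set.image_insert_eq, hvalx]
    congr 1
    exact (Set.image_congr hval).symm
  · intro i hi
    by_cases hif : i = f - 1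
    · subst hif
      refine ⟨b, ?_, ?_, ?_⟩
      · rcases hb with h0 | hbP
        · exact Or.inl h0
        · have : (b : ℕ) ∈ p '' Set.Ico f n := by rw [← himg]; simpa using hbP
          obtain ⟨j, hj, hpj⟩ := this
          exact Or.inr ⟨j, hlift j hj, by have := hne j hj; simp only [Set.mem_Ico] at hj; omega,
            by rw [hval j hj]; exact hpj⟩
      · rw [hvalx]; omega
      · rw [hvalx]
        have : 1 ≤ 2 ^ (f - 1) := Nat.one_le_two_pow
        omega
    · have hi' : i ∈ Set.Ico f n := by
        simp only [Set.mem_Ico] at hi ⊢; omega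
      obtain ⟨q, hq, h1, h2⟩ := hwit i hi'
      refine ⟨q, ?_, by rw [hval i hi']; exact h1, by rw [hval i hi']; exact h2⟩
      rcases hq with h0 | ⟨j, hj, hij, hpj⟩
      · exact Or.inl h0
      · exact Or.inr ⟨j, hlift j hj, hij, by rw [hval j hj]; exact hpj⟩

lemma remove_good (f n z : ℕ) (P : Finset ℕ) (hz : z ∈ P)
    (b : ℕ) (hb : b = 0 ∨ b ∈ P) (hbz : b + 1 = z)
    (hg : GoodNumbering f n P) : GoodNumbering (f + 1) n (P.erase z) := by
  obtain ⟨p, hinj, himg, hwit⟩ := hg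
  have hzim : (z : ℕ) ∈ p '' Set.Ico f n := by rw [← himg]; simpa using hz
  obtain ⟨k, hk, hpk⟩ := hzim
  have hkIco : f ≤ k ∧ k < n := by simpa [Set.mem_Ico] using hk
  set p' : ℕ → ℕ := fun j => if j ≤ k then p (j - 1) else p j with hp'
  -- basic facts about the index maps
  have hι : ∀ j, j ∈ Set.Ico (f + 1) n →
      (if j ≤ k then j - 1 else j) ∈ Set.Ico f n ∧ (if j ≤ k then j - 1 else j) ≠ k ∧
      p' j = p (if j ≤ k then j - 1 else j) ∧ (if j ≤ k then j - 1 else j) ≤ j ∧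
      j ≤ (if j ≤ k then j - 1 else j) + 1 := by
    intro j hj
    simp only [Set.mem_Ico] at hj
    by_cases h : j ≤ k <;> simp only [if_pos, if_neg, h, ite_true, ite_false, Set.mem_Ico]
    · refine ⟨by omega, by omega, ?_, by omega, by omega⟩
      simp only [hp', if_pos h]
    · refine ⟨by omega, by omega, ?_, by omega, by omega⟩
      simp only [hp', if_neg h]
  have hν : ∀ m, m ∈ Set.Ico f n → m ≠ k →
      (if m < k then m + 1 else m) ∈ Set.Ico (f + 1) n ∧
      p' (if m < k then m + 1 else m) = p m := by
    intro m hm hmk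
    simp only [Set.mem_Ico] at hm ⊢
    by_cases h : m < k <;> simp only [h, ite_true, ite_false]
    · refine ⟨by omega, ?_⟩
      simp only [hp']
      rw [if_pos (by omega : m + 1 ≤ k)]
      simp
    · refine ⟨by omega, ?_⟩
      simp only [hp']
      rw [if_neg (by omega : ¬ m ≤ k)]
  -- order preservation: new index of a higher-old-index witness exceeds j
  have hlt : ∀ j, j ∈ Set.Ico (f + 1) n → ∀ m₁, m₁ ≠ k →
      (if j ≤ k then j - 1 else j) < m₁ → j < (if m₁ < k then m₁ + 1 else m₁) := by
    intro j hj m₁ hm₁k hlt'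
    simp only [Set.mem_Ico] at hj
    split_ifs at hlt' ⊢ <;> omega
  refine ⟨p', ?_, ?_, ?_⟩
  · -- injectivity
    intro a ha b2 hb2 hab
    have Ha := hι a ha
    have Hb := hι b2 hb2
    rw [Ha.2.2.1, Hb.2.2.1] at hab
    have := hinj Ha.1 Hb.1 hab
    simp only [Set.mem_Ico] at ha hb2
    split_ifs at this <;> omega
  · -- image
    rw [Finset.coe_erase, himg]
    ext y
    constructor
    · rintro ⟨⟨m, hm, rfl⟩, hyz⟩
      have hmk : m ≠ k := by
        intro h; rw [h, hpk] at hyz; exact hyz rfl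
      have H := hν m hm hmk
      exact ⟨_, H.1, H.2⟩
    · rintro ⟨j, hj, rfl⟩
      have H := hι j hj
      rw [H.2.2.1]
      refine ⟨⟨_, H.1, rfl⟩, ?_⟩
      intro hcontra
      rw [← hpk] at hcontra
      exact H.2.1 (hinj H.1 hk hcontra)
  · -- witnesses
    intro j hj
    have H := hι j hj
    set m := if j ≤ k then j - 1 else j with hm
    obtain ⟨hmIco, hmk, hpj, hmlej, hjlem⟩ := H
    obtain ⟨q0, hq0, hlt0, hle0⟩ := hwit m hmIco
    have hpow : ∀ u v : ℕ, u ≤ v → (2:ℕ) ^ u ≤ 2 ^ v :=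
      fun u v huv => Nat.pow_le_pow_right (by norm_num) huv
    by_cases hq0z : q0 = z
    · -- orphan case: old witness was the removed pebble z
      rw [hq0z] at hq0 hlt0 hle0
      -- derive m < k and j = m + 1
      have hm1k : m < k := by
        rcases hq0 with h0 | ⟨m₁, hm₁, hmm₁, hpm1⟩
        · omega
        · have : m₁ = k := hinj hm₁ hk (by rw [hpm1, hpk])
          omega
      have hjm1 : j = m + 1 := by
        simp only [Set.mem_Ico] at hj
        simp only [hm]
        split_ifs with h <;> omega
      have hwgt : z < p m := hlt0
      have hwle : p m ≤ z + 2 ^ m := hle0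
      have h2m : (2:ℕ) ^ (m + 1) = 2 ^ m + 2 ^ m := by rw [pow_succ]; omega
      -- the chain lemma
      have CL : ∀ c, ∀ mc, mc ∈ Set.Ico f n → p mc = c → c < z → mc < m →
          ∃ q', q' ≤ c ∧
            (q' = 0 ∨ ∃ m'' ∈ Set.Ico f n, m < m'' ∧ m'' ≠ k ∧ p m'' = q') ∧
            c + 2 ^ mc ≤ q' + 2 ^ m := by
        intro c
        induction c using Nat.strong_induction_on with
        | _ c IH =>
          intro mc hmc hpmc hcz hmcm
          obtain ⟨qc, hqc, hqlt, hqle⟩ := hwit mc hmc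
          rw [hpmc] at hqlt hqle
          rcases hqc with h0 | ⟨m₁, hm₁, hmc1, hpm1⟩
          · refine ⟨0, by omega, Or.inl rfl, ?_⟩
            have h1 : (2:ℕ) ^ (mc + 1) ≤ 2 ^ m := hpow _ _ (by omega)
            have h2 : (2:ℕ) ^ (mc + 1) = 2 ^ mc + 2 ^ mc := by rw [pow_succ]; omega
            omega
          · have hq_lt_c : qc < c := hqlt
            have hm₁k : m₁ ≠ k := by
              intro h; rw [h, hpk] at hpm1; omega
            have hm₁m : m₁ ≠ m := by
              intro h; rw [h] at hpm1; omega
            by_cases hcmp : m < m₁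
            · refine ⟨qc, by omega, Or.inr ⟨m₁, hm₁, hcmp, hm₁k, hpm1⟩, ?_⟩
              have h1 : (2:ℕ) ^ (mc + 1) ≤ 2 ^ m := hpow _ _ (by omega)
              have h2 : (2:ℕ) ^ (mc + 1) = 2 ^ mc + 2 ^ mc := by rw [pow_succ]; omega
              omega
            · have hm₁ltm : m₁ < m := by omega
              obtain ⟨q', hq'le, hq'good, hq'bound⟩ :=
                IH qc hq_lt_c m₁ hm₁ hpm1 (by omega) hm₁ltm
              refine ⟨q', by omega, hq'good, ?_⟩
              have h1 : (2:ℕ) ^ (mc + 1) ≤ 2 ^ m₁ := hpow _ _ (by omega)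
              have h2 : (2:ℕ) ^ (mc + 1) = 2 ^ mc + 2 ^ mc := by rw [pow_succ]; omega
              omega
      -- translate a good q' into the required form
      have hgood : ∀ q', (q' = 0 ∨ ∃ m'' ∈ Set.Ico f n, m < m'' ∧ m'' ≠ k ∧ p m'' = q') →
          (q' = 0 ∨ ∃ j'' ∈ Set.Ico (f + 1) n, j < j'' ∧ p' j'' = q') := by
        rintro q' (h0 | ⟨m'', hm'', hmm'', hm''k, hpm''⟩)
        · exact Or.inl h0
        · have Hν := hν m'' hm'' hm''k
          exact Or.inr ⟨_, Hν.1, hlt j hj m'' hm''k (by rw [← hm]; omega), by rw [Hν.2]; exact hpm''⟩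
      rcases hb with hb0 | hbP
      · -- b = 0, z = 1
        refine ⟨0, Or.inl rfl, by rw [hpj]; omega, ?_⟩
        rw [hpj, hjm1]
        have : 1 ≤ (2:ℕ) ^ m := Nat.one_le_two_pow
        omega
      · have hbim : (b : ℕ) ∈ p '' Set.Ico f n := by rw [← himg]; simpa using hbP
        obtain ⟨mb, hmb, hpmb⟩ := hbim
        have hmbk : mb ≠ k := by
          intro h; rw [h, hpk] at hpmb; omega
        by_cases hcmp : m < mb
        · refine ⟨b, hgood b (Or.inr ⟨mb, hmb, hcmp, hmbk, hpmb⟩), by rw [hpj]; omega, ?_⟩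
          rw [hpj, hjm1]
          omega
        · have hmbm : mb ≠ m := by
            intro h; rw [h] at hpmb; omega
          obtain ⟨q', hq'le, hq'good, hq'bound⟩ :=
            CL b mb hmb hpmb (by omega) (by omega)
          refine ⟨q', hgood q' hq'good, by rw [hpj]; omega, ?_⟩
          rw [hpj, hjm1]
          have : 1 ≤ (2:ℕ) ^ mb := Nat.one_le_two_pow
          omega
    · -- easy case: old witness survives
      refine ⟨q0, ?_, by rw [hpj]; exact hlt0, ?_⟩
      · rcases hq0 with h0 | ⟨m₁, hm₁, hmm₁, hpm1⟩
        · exact Or.inl h0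
        · have hm₁k : m₁ ≠ k := by
            intro h; rw [h, hpk] at hpm1; exact hq0z hpm1.symm
          have Hν := hν m₁ hm₁ hm₁k
          exact Or.inr ⟨_, Hν.1, hlt j hj m₁ hm₁k (by rw [← hm]; omega),
            by rw [Hν.2]; exact hpm1⟩
      · rw [hpj]
        have := Nat.pow_le_pow_right (show 1 ≤ 2 by norm_num) hmlej
        omega

lemma good_realizable (n f : ℕ) (P : Finset ℕ) (hcard : P.card + f = n)
    (hg : GoodNumbering f n P) : Realizable n (insert 0 P) := by
  obtain ⟨p, hinj, himg, hwit⟩ := hg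
  have hPeq : P = (Finset.Ico f n).image p := by
    apply Finset.coe_injective
    rw [Finset.coe_image, Finset.coe_Ico, himg]
  have hfn : f ≤ n := by
    by_contra h
    have : Finset.Ico f n = ∅ := by rw [Finset.Ico_eq_empty]; omega
    rw [hPeq, this] at hcard
    simp at hcard
    omega
  have key : ∀ s, s ≤ n - f →
      Realizable n (insert 0 ((Finset.Ico (n - s) n).image p)) := by
    intro s
    induction s with
    | zero =>
      intro _
      simp only [Nat.sub_zero, Finset.Ico_self, Finset.image_empty]
      exact Relation.ReflTransGen.refl
    | succ s IH =>
      intro hs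
      set t := n - (s + 1) with htdef
      have ht1 : t + 1 = n - s := by omega
      have htf : f ≤ t := by omega
      have htn : t < n := by omega
      have htmem : t ∈ Set.Ico f n := by simp [Set.mem_Ico]; omega
      obtain ⟨q, hq, hqlt, hqle⟩ := hwit t htmem
      set D := insert 0 ((Finset.Ico (t + 1) n).image p) with hD
      have hqD : q ∈ D := by
        rcases hq with h0 | ⟨j, hj, htj, hpj⟩
        · rw [h0]; exact Finset.mem_insert_self _ _
        · refine Finset.mem_insert_of_mem (Finset.mem_image.2 ⟨j, ?_, hpj⟩)
          simp only [Set.mem_Ico] at hj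
          simp [Finset.mem_Ico]; omega
      set S := D.filter (fun x => x < p t) with hS
      have hqS : q ∈ S := by
        rw [hS, Finset.mem_filter]; exact ⟨hqD, hqlt⟩
      have hSne : S.Nonempty := ⟨q, hqS⟩
      set a := S.max' hSne with ha
      have haS : a ∈ S := S.max'_mem hSne
      have haD : a ∈ D := (Finset.mem_filter.1 haS).1
      have halt : a < p t := (Finset.mem_filter.1 haS).2
      have haq : q ≤ a := S.le_max' q hqS
      set d := p t - a with hd
      have hdpos : 0 < d := by omega
      have hdle : d ≤ 2 ^ t := by omega
      have hptD : p t ∉ D := by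
        rw [hD]
        simp only [Finset.mem_insert, Finset.mem_image, Finset.mem_Ico, not_or]
        constructor
        · omega
        · rintro ⟨j, hj, hpj⟩
          have : j = t := hinj (by simp [Set.mem_Ico]; omega) htmem hpj
          omega
      have hemp : ∀ x, a < x → x ≤ a + d → x ∉ D := by
        intro x hx1 hx2 hxD
        have hxlt : x < p t ∨ x = p t := by omega
        rcases hxlt with h | h
        · have : x ∈ S := Finset.mem_filter.2 ⟨hxD, h⟩
          have := S.le_max' x this
          omega
        · rw [h] at hxD; exact hptD hxD
      have hcardD : D.card + t + 1 ≤ n + 1 := by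
        have h1 : D.card ≤ ((Finset.Ico (t + 1) n).image p).card + 1 :=
          Finset.card_insert_le _ _
        have h2 : ((Finset.Ico (t + 1) n).image p).card ≤ (Finset.Ico (t + 1) n).card :=
          Finset.card_image_le
        rw [Nat.card_Ico] at h2
        omega
      have hstep := (lemA n t D a d haD hdpos hdle hemp hcardD).1
      have had : a + d = p t := by omega
      rw [had] at hstep
      have hCt : insert 0 ((Finset.Ico t n).image p) = insert (p t) D := by
        rw [hD]
        have hIco : Finset.Ico t n = insert t (Finset.Ico (t + 1) n) := by
          ext x; simp only [Finset.mem_Ico, Finset.mem_insert]; omega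
        rw [hIco, Finset.image_insert, Finset.insert_comm]
      have hIH := IH (by omega)
      rw [← ht1] at hIH
      rw [htdef, hCt]
      exact hIH.trans hstep
  have := key (n - f) le_rfl
  have hnnf : n - (n - f) = f := by omega
  rw [hnnf, ← hPeq] at this
  exact this

lemma inv_of_realizable (n : ℕ) (C : Finset ℕ) (h : Realizable n C) :
    0 ∈ C ∧ C.card ≤ n + 1 ∧ GoodNumbering (n + 1 - C.card) n (C.erase 0) := by
  induction h with
  | refl =>
    refine ⟨Finset.mem_singleton_self 0, by simp, ?_⟩
    have h1 : ({0} : Finset ℕ).card = 1 := rfl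
    have h2 : ({0} : Finset ℕ).erase 0 = ∅ := by simp
    rw [h1, h2]
    refine ⟨id, fun a _ b _ hab => hab, ?_, ?_⟩
    · simp [Set.Ico_self]
    · intro i hi; simp [Set.Ico_self] at hi
  | @tail B C' hstep hmove ih =>
    obtain ⟨h0, hc, hg⟩ := ih
    rcases hmove with ⟨i, hiB, hinotB, hcn, rfl⟩ | ⟨i, hiB, hi1B, rfl⟩
    · -- place
      have hcard' : (insert (i + 1) B).card = B.card + 1 :=
        Finset.card_insert_of_notMem hinotB
      have hB1 : 1 ≤ B.card := Finset.card_pos.2 ⟨0, h0⟩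
      have herase : (insert (i + 1) B).erase 0 = insert (i + 1) (B.erase 0) :=
        Finset.erase_insert_of_ne (by omega)
      refine ⟨Finset.mem_insert_of_mem h0, by omega, ?_⟩
      rw [hcard', herase]
      have hx : i + 1 ∉ B.erase 0 := fun hmem => hinotB (Finset.mem_of_mem_erase hmem)
      have hb : i = 0 ∨ i ∈ B.erase 0 := by
        by_cases h : i = 0
        · exact Or.inl h
        · exact Or.inr (Finset.mem_erase.2 ⟨h, hiB⟩)
      have := place_good (n + 1 - B.card) n (i + 1) (B.erase 0)
        (by omega) (by omega) hx i hb rfl hg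
      have heq : n + 1 - (B.card + 1) = n + 1 - B.card - 1 := by omega
      rw [heq]
      exact this
    · -- remove
      have hne : (0:ℕ) ≠ i + 1 := by omega
      have h2le : 2 ≤ B.card := by
        have : ({0, i + 1} : Finset ℕ) ⊆ B := by
          intro x hx
          simp only [Finset.mem_insert, Finset.mem_singleton] at hx
          rcases hx with rfl | rfl
          · exact h0
          · exact hi1B
        have hcard2 : ({0, i + 1} : Finset ℕ).card = 2 := by
          rw [Finset.card_insert_of_notMem (by simp [hne]), Finset.card_singleton]
        calc 2 = ({0, i + 1} : Finset ℕ).card := hcard2.symm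
          _ ≤ B.card := Finset.card_le_card this
      have hcard' : (B.erase (i + 1)).card = B.card - 1 :=
        Finset.card_erase_of_mem hi1B
      refine ⟨Finset.mem_erase.2 ⟨hne, h0⟩, by omega, ?_⟩
      have herase : (B.erase (i + 1)).erase 0 = (B.erase 0).erase (i + 1) :=
        Finset.erase_right_comm
      rw [hcard', herase]
      have hz : i + 1 ∈ B.erase 0 := Finset.mem_erase.2 ⟨(by omega), hi1B⟩
      have hb : i = 0 ∨ i ∈ B.erase 0 := by
        by_cases h : i = 0
        · exact Or.inl h
        · exact Or.inr (Finset.mem_erase.2 ⟨h, hiB⟩)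
      have := remove_good (n + 1 - B.card) n (i + 1) (B.erase 0) hz i hb rfl hg
      have heq : n + 1 - (B.card - 1) = n + 1 - B.card + 1 := by omega
      rw [heq]
      exact this


/-- A configuration with `f` free pebbles and `n - f` placed pebbles is
realizable iff its placed pebbles admit a good numbering. -/
theorem realizable_iff_goodNumbering (n f : ℕ) (P : Finset ℕ)
    (h0 : 0 ∉ P) (hcard : P.card + f = n) :
    Realizable n (insert 0 P) ↔ GoodNumbering f n P := by
  constructor
  · intro h
    obtain ⟨_, hc, hg⟩ := inv_of_realizable n _ h
    have hcard' : (insert 0 P).card = P.card + 1 := Finset.card_insert_of_notMem h0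
    have herase : (insert 0 P).erase 0 = P := Finset.erase_insert h0
    rw [hcard', herase] at hg
    have heq : n + 1 - (P.card + 1) = f := by omega
    rw [heq] at hg
    exact hg
  · intro hg
    exact good_realizable n f P hcard hg
end

section
/- In the reversible pebble game with n pebbles, the maximum node that can be pebbled is 2^n - 1. That is, there is a sequence of legal moves placing a pebble on node 2^n - 1, and no sequence of legal moves ever places a pebble on any node greater than 2^n - 1. -/
namespace PebbleAux

open Finset

/-! ### Construction: the recursive strategy -/

/-- The configuration left above `b` after pushing a pebble to `b + 2^k - 1`. -/
def Dset (b k : ℕ) : Finset ℕ := (Finset.range k).image (fun j => b + 2 ^ k - 2 ^ j)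

lemma mem_Dset_lt {b k x : ℕ} (hx : x ∈ Dset b k) : b < x ∧ x < b + 2 ^ k := by
  simp only [Dset, mem_image, mem_range] at hx
  obtain ⟨j, hj, rfl⟩ := hx
  have h1 : 2 ^ j < 2 ^ k := Nat.pow_lt_pow_right (by norm_num) hj
  have h0 : 0 < 2 ^ j := Nat.pow_pos (by norm_num)
  omega

lemma build (n : ℕ) : ∀ (k b : ℕ) (C : Finset ℕ), b ∈ C → C.card + k ≤ n + 1 →
    (∀ j, b < j → j < b + 2 ^ k → j ∉ C) →
    Relation.ReflTransGen (Move n) C (C ∪ Dset b k) ∧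
    Relation.ReflTransGen (Move n) (C ∪ Dset b k) C := by
  intro k
  induction k with
  | zero =>
    intro b C _ _ _
    have : Dset b 0 = ∅ := by simp [Dset]
    rw [this, Finset.union_empty]
    exact ⟨Relation.ReflTransGen.refl, Relation.ReflTransGen.refl⟩
  | succ k ih =>
    intro b C hb hcard hdisj
    have hpk : 0 < 2 ^ k := Nat.pow_pos (by norm_num)
    have hps : 2 ^ (k + 1) = 2 ^ k + 2 ^ k := by rw [pow_succ]; omega
    have hmnotC : b + 2 ^ k ∉ C := hdisj _ (by omega) (by omega)
    have hmD : b + 2 ^ k ∉ Dset b k := fun h => by have := mem_Dset_lt h; omega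
    have hmCD : b + 2 ^ k ∉ C ∪ Dset b k := by
      simp only [mem_union]; push_neg; exact ⟨hmnotC, hmD⟩
    have h1 := ih b C hb (by omega) (fun j h1 h2 => hdisj j h1 (by omega))
    have hmem2 : b ∈ insert (b + 2 ^ k) C := mem_insert_of_mem hb
    have hcard2 : (insert (b + 2 ^ k) C).card + k ≤ n + 1 := by
      have := card_insert_le (b + 2 ^ k) C
      omega
    have hdisj2 : ∀ j, b < j → j < b + 2 ^ k → j ∉ insert (b + 2 ^ k) C := by
      intro j hj1 hj2
      simp only [mem_insert]; push_neg
      exact ⟨by omega, hdisj j hj1 (by omega)⟩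
    have h2 := ih b (insert (b + 2 ^ k) C) hmem2 hcard2 hdisj2
    have hdisj3 : ∀ j, b + 2 ^ k < j → j < b + 2 ^ k + 2 ^ k → j ∉ insert (b + 2 ^ k) C := by
      intro j hj1 hj2
      simp only [mem_insert]; push_neg
      exact ⟨by omega, hdisj j (by omega) (by omega)⟩
    have h3 := ih (b + 2 ^ k) (insert (b + 2 ^ k) C) (mem_insert_self _ _) hcard2 hdisj3
    have hiMem : b + 2 ^ k - 1 ∈ C ∪ Dset b k := by
      rcases Nat.eq_zero_or_pos k with hk0 | hk0
      · subst hk0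
        have : b + 2 ^ 0 - 1 = b := by norm_num
        rw [this]; exact mem_union_left _ hb
      · refine mem_union_right _ ?_
        simp only [Dset, mem_image, mem_range]
        exact ⟨0, hk0, by norm_num⟩
    have hcardCD : (C ∪ Dset b k).card ≤ n := by
      have h4 := card_union_le C (Dset b k)
      have h5 : (Dset b k).card ≤ k := le_trans card_image_le (by simp)
      omega
    have hi1 : b + 2 ^ k - 1 + 1 = b + 2 ^ k := by omega
    have hstep1 : Move n (C ∪ Dset b k) (insert (b + 2 ^ k) (C ∪ Dset b k)) := by
      left
      refine ⟨b + 2 ^ k - 1, hiMem, ?_, hcardCD, ?_⟩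
      · rw [hi1]; exact hmCD
      · rw [hi1]
    have hE1 : insert (b + 2 ^ k) (C ∪ Dset b k) = (insert (b + 2 ^ k) C) ∪ Dset b k :=
      (insert_union _ _ _).symm
    have hE2 : (insert (b + 2 ^ k) C) ∪ Dset (b + 2 ^ k) k = C ∪ Dset b (k + 1) := by
      have hD : Dset b (k + 1) = insert (b + 2 ^ k) (Dset (b + 2 ^ k) k) := by
        simp only [Dset]
        rw [Finset.range_add_one, Finset.image_insert]
        have he : b + 2 ^ (k + 1) - 2 ^ k = b + 2 ^ k := by omega
        rw [he]
        congr 1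
        apply Finset.image_congr
        intro j hj
        have hjk : 2 ^ j ≤ 2 ^ k :=
          Nat.pow_le_pow_right (by norm_num) (le_of_lt (mem_range.mp hj))
        show b + 2 ^ (k + 1) - 2 ^ j = b + 2 ^ k + 2 ^ k - 2 ^ j
        omega
      rw [hD, insert_union, union_insert]
    have hiMem' : b + 2 ^ k - 1 ∈ (insert (b + 2 ^ k) C) ∪ Dset b k := by
      rw [← hE1]; exact mem_insert_of_mem hiMem
    have hstep2 : Move n ((insert (b + 2 ^ k) C) ∪ Dset b k) (C ∪ Dset b k) := by
      right
      refine ⟨b + 2 ^ k - 1, hiMem', ?_, ?_⟩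
      · rw [hi1, ← hE1]; exact mem_insert_self _ _
      · rw [hi1, ← hE1, erase_insert hmCD]
    constructor
    · refine Relation.ReflTransGen.trans (h1.1.tail hstep1) ?_
      rw [hE1, ← hE2]
      exact h2.2.trans h3.1
    · rw [← hE2]
      exact h3.2.trans (h2.1.trans ((Relation.ReflTransGen.single hstep2).trans h1.2))

/-! ### Upper bound: the harvest invariant -/

/-- A harvest step: remove an element `x` having a lower neighbour within
distance `2 ^ (n + 1 - |S|)`. -/
def hstep (n : ℕ) (S S' : Finset ℕ) : Prop :=
  ∃ x ∈ S, (∃ y ∈ S, y < x ∧ x - y ≤ 2 ^ (n + 1 - S.card)) ∧ S' = S.erase x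

/-- The invariant: every harvest state is low. -/
def Pinv (n : ℕ) (C : Finset ℕ) : Prop :=
  ∀ S : Finset ℕ, Relation.ReflTransGen (hstep n) C S → ∀ hS : S.Nonempty,
    S.max' hS + 2 ^ (n + 1 - S.card) ≤ 2 ^ n

lemma Pinv_init (n : ℕ) : Pinv n {0} := by
  intro S h hS
  have hS0 : S = {0} := by
    induction h with
    | refl => rfl
    | tail _ hbc ihh =>
      rename_i B S' hab
      have hB : B = {0} := ihh (by
        obtain ⟨x, hx, ⟨y, hy, hyx, _⟩, rfl⟩ := hbc
        exact Finset.nonempty_of_ne_empty (by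
          intro hemp
          rw [hemp] at hy
          exact absurd hy (Finset.notMem_empty y)))
      obtain ⟨x, hx, ⟨y, hy, hyx, _⟩, rfl⟩ := hbc
      rw [hB] at hx hy
      simp only [Finset.mem_singleton] at hx hy
      omega
  subst hS0
  simp only [Finset.max'_singleton, Finset.card_singleton]
  have : n + 1 - 1 = n := by omega
  rw [this]
  omega

lemma place_key (n : ℕ) (C : Finset ℕ) (i : ℕ) (hi : i ∈ C) (hi1 : i + 1 ∉ C)
    (hcard : C.card ≤ n) :
    ∀ S, Relation.ReflTransGen (hstep n) (insert (i + 1) C) S →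
      (i + 1 ∈ S ∧ S.card ≤ n + 1 ∧
        (∃ y ∈ S, y < i + 1 ∧ i + 1 - y ≤ 2 ^ (n + 1 - S.card)) ∧
        Relation.ReflTransGen (hstep n) C (S.erase (i + 1)))
      ∨ (i + 1 ∉ S ∧ Relation.ReflTransGen (hstep n) C S) := by
  intro S h
  induction h with
  | refl =>
    left
    refine ⟨mem_insert_self _ _, ?_, ⟨i, mem_insert_of_mem hi, by omega, ?_⟩, ?_⟩
    · rw [card_insert_of_notMem hi1]; omega
    · have : i + 1 - i = 1 := by omega
      rw [this]
      exact Nat.one_le_pow _ _ (by norm_num)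
    · rw [erase_insert hi1]
  | tail hab hbc ihh =>
    rename_i B S'
    obtain ⟨x, hxB, ⟨y, hyB, hyx, hgap⟩, rfl⟩ := hbc
    rcases ihh with ⟨h1mem, hBcard, ⟨w, hwB, hw1, hwgap⟩, hmir⟩ | ⟨h1not, hCB⟩
    · by_cases hx1 : x = i + 1
      · subst hx1
        exact Or.inr ⟨notMem_erase _ _, hmir⟩
      · left
        have hBpos : 0 < B.card := card_pos.mpr ⟨x, hxB⟩
        have hecard : (B.erase x).card = B.card - 1 := card_erase_of_mem hxB
        have hexp : n + 1 - (B.erase x).card = (n + 1 - B.card) + 1 := by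
          rw [hecard]; omega
        have hpow : 2 ^ ((n + 1 - B.card) + 1) = 2 ^ (n + 1 - B.card) * 2 := pow_succ 2 _
        refine ⟨mem_erase.mpr ⟨fun hc => hx1 hc.symm, h1mem⟩, ?_, ?_, ?_⟩
        · have := card_erase_le (a := x) (s := B); omega
        · -- gap witness for i+1 in B.erase x
          by_cases hwx : w = x
          · refine ⟨y, mem_erase.mpr ⟨by omega, hyB⟩, by omega, ?_⟩
            rw [hexp, hpow]
            omega
          · refine ⟨w, mem_erase.mpr ⟨hwx, hwB⟩, hw1, ?_⟩
            rw [hexp, hpow]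
            omega
        · -- mirrored step
          refine hmir.tail ?_
          have hxm : x ∈ B.erase (i + 1) := mem_erase.mpr ⟨hx1, hxB⟩
          have hecard' : (B.erase (i + 1)).card = B.card - 1 := card_erase_of_mem h1mem
          have hexp' : n + 1 - (B.erase (i + 1)).card = (n + 1 - B.card) + 1 := by
            rw [hecard']; omega
          refine ⟨x, hxm, ?_, ?_⟩
          · by_cases hy1 : y = i + 1
            · refine ⟨w, mem_erase.mpr ⟨by omega, hwB⟩, by omega, ?_⟩
              rw [hexp', hpow]
              omega
            · refine ⟨y, mem_erase.mpr ⟨hy1, hyB⟩, hyx, ?_⟩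
              rw [hexp', hpow]
              omega
          · rw [Finset.erase_right_comm]
    · refine Or.inr ⟨?_, hCB.tail ⟨x, hxB, ⟨y, hyB, hyx, hgap⟩, rfl⟩⟩
      intro hc
      exact h1not (mem_of_mem_erase hc)

lemma Pinv_move {n : ℕ} {C D : Finset ℕ} (hP : Pinv n C) (hM : Move n C D) : Pinv n D := by
  rcases hM with ⟨i, hi, hi1, hcard, rfl⟩ | ⟨i, hi, hi1, rfl⟩
  · -- placement
    intro S h hS
    rcases place_key n C i hi hi1 hcard S h with
      ⟨h1mem, hScard, ⟨w, hwS, hw1, hwgap⟩, hmir⟩ | ⟨_, hCS⟩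
    · have hwS' : w ∈ S.erase (i + 1) := mem_erase.mpr ⟨by omega, hwS⟩
      have hne : (S.erase (i + 1)).Nonempty := ⟨w, hwS'⟩
      have hB := hP _ hmir hne
      have hSpos : 0 < S.card := card_pos.mpr hS
      have hecard : (S.erase (i + 1)).card = S.card - 1 := card_erase_of_mem h1mem
      have hexp : n + 1 - (S.erase (i + 1)).card = (n + 1 - S.card) + 1 := by
        rw [hecard]; omega
      rw [hexp, pow_succ] at hB
      have hM := Finset.max'_mem S hS
      by_cases hMi : S.max' hS = i + 1
      · have hwle : w ≤ (S.erase (i + 1)).max' hne := le_max' _ _ hwS'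
        rw [hMi]
        omega
      · have hMS' : S.max' hS ∈ S.erase (i + 1) := mem_erase.mpr ⟨hMi, hM⟩
        have : S.max' hS ≤ (S.erase (i + 1)).max' hne := le_max' _ _ hMS'
        omega
    · exact hP S hCS hS
  · -- removal: it is itself a harvest step
    intro S h hS
    refine hP S (Relation.ReflTransGen.head ?_ h) hS
    refine ⟨i + 1, hi1, ⟨i, hi, by omega, ?_⟩, rfl⟩
    have : i + 1 - i = 1 := by omega
    rw [this]
    exact Nat.one_le_pow _ _ (by norm_num)

lemma realizable_Pinv {n : ℕ} {C : Finset ℕ} (h : Realizable n C) : Pinv n C := by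
  induction h with
  | refl => exact Pinv_init n
  | tail _ hbc ihh => exact Pinv_move ihh hbc

end PebbleAux

open PebbleAux in
/-- With `n` pebbles the maximum node that can be pebbled is `2 ^ n - 1`:
some legal play pebbles node `2 ^ n - 1`, and no legal play ever places a
pebble on a node greater than `2 ^ n - 1`. -/
theorem max_pebbled_node (n : ℕ) :
    (∃ C : Finset ℕ, Realizable n C ∧ 2 ^ n - 1 ∈ C) ∧
    (∀ C : Finset ℕ, Realizable n C → ∀ j ∈ C, j ≤ 2 ^ n - 1) := by
  constructor
  · refine ⟨{0} ∪ Dset 0 n, ?_, ?_⟩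
    · exact (build n n 0 {0} (Finset.mem_singleton_self 0)
        (by rw [Finset.card_singleton]; omega) (by intro j h1 h2; simp; omega)).1
    · rcases Nat.eq_zero_or_pos n with hn | hn
      · subst hn
        exact Finset.mem_union_left _ (by simp)
      · refine Finset.mem_union_right _ ?_
        simp only [Dset, Finset.mem_image, Finset.mem_range]
        exact ⟨0, hn, by norm_num⟩
  · intro C hC j hj
    have hP := realizable_Pinv hC
    have hne : C.Nonempty := ⟨j, hj⟩
    have hb := hP C Relation.ReflTransGen.refl hne
    have hjle : j ≤ C.max' hne := Finset.le_max' _ _ hj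
    have h1 : 1 ≤ 2 ^ (n + 1 - C.card) := Nat.one_le_pow _ _ (by norm_num)
    have h2 : 1 ≤ 2 ^ n := Nat.one_le_pow _ _ (by norm_num)
    omega
end

section
/- The upper bound in the realizability characterization: if a configuration's placed pebbles, with f free pebbles, are numbered f,...,n-1 with pebble i having a higher-numbered pebble at most 2^i positions to its left, then the rightmost placed pebble is on a node at most 2^f + 2^{f+1} + ... + 2^{n-1} + ... ≤ 2^n - 1. In particular, any realizable configuration with n pebbles total has all pebbles on nodes ≤ 2^n - 1. -/
lemma pebble_sum_range_pow (n : ℕ) : ∑ k ∈ Finset.range n, 2 ^ k = 2 ^ n - 1 := by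
  induction n with
  | zero => simp
  | succ n ih =>
    rw [Finset.sum_range_succ, ih]
    have h := Nat.one_le_two_pow (n := n)
    have : (2:ℕ) ^ (n+1) = 2 * 2 ^ n := by ring
    omega

lemma sum_pow_le (f n : ℕ) : ∑ k ∈ Finset.Ico f n, 2 ^ k ≤ 2 ^ n - 1 := by
  have h2 := pebble_sum_range_pow n
  have h1 : ∑ k ∈ Finset.Ico f n, 2 ^ k ≤ ∑ k ∈ Finset.range n, 2 ^ k := by
    apply Finset.sum_le_sum_of_subset
    intro x hx
    simp only [Finset.mem_Ico] at hx
    simp only [Finset.mem_range]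
    omega
  omega

lemma bound_aux (f n : ℕ) (p : ℕ → ℕ)
    (hgood : ∀ i ∈ Set.Ico f n, ∃ q,
      (q = 0 ∨ ∃ j ∈ Set.Ico f n, i < j ∧ p j = q) ∧ q < p i ∧ p i ≤ q + 2 ^ i) :
    ∀ i ∈ Set.Ico f n, p i ≤ ∑ k ∈ Finset.Ico i n, 2 ^ k := by
  have key : ∀ d i, i ∈ Set.Ico f n → n - i ≤ d → p i ≤ ∑ k ∈ Finset.Ico i n, 2 ^ k := by
    intro d
    induction d with
    | zero =>
      intro i hi h
      simp only [Set.mem_Ico] at hi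
      omega
    | succ d ih =>
      intro i hi hd
      have hi' := hi
      simp only [Set.mem_Ico] at hi'
      obtain ⟨q, hq, hlt, hle⟩ := hgood i hi
      have hsum : ∑ k ∈ Finset.Ico i n, 2 ^ k
          = 2 ^ i + ∑ k ∈ Finset.Ico (i+1) n, 2 ^ k :=
        Finset.sum_eq_sum_Ico_succ_bot hi'.2 _
      rcases hq with rfl | ⟨j, hj, hij, rfl⟩
      · have : ∑ k ∈ Finset.Ico (i+1) n, 2 ^ k ≥ 0 := Nat.zero_le _
        omega
      · have hj' := hj
        simp only [Set.mem_Ico] at hj'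
        have h1 : p j ≤ ∑ k ∈ Finset.Ico j n, 2 ^ k := ih j hj (by omega)
        have h2 : ∑ k ∈ Finset.Ico j n, 2 ^ k ≤ ∑ k ∈ Finset.Ico (i+1) n, 2 ^ k := by
          apply Finset.sum_le_sum_of_subset
          apply Finset.Ico_subset_Ico (by omega) le_rfl
        omega
  intro i hi
  exact key (n - i) i hi le_rfl

lemma chain_lemma (f n : ℕ) (p : ℕ → ℕ)
    (hgood : ∀ i ∈ Set.Ico f n, ∃ q,
      (q = 0 ∨ ∃ j ∈ Set.Ico f n, i < j ∧ p j = q) ∧ q < p i ∧ p i ≤ q + 2 ^ i) :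
    ∀ a ∈ Set.Ico f n, ∀ T, a ≤ T →
      ∃ q, (q = 0 ∨ ∃ j ∈ Set.Ico f n, T < j ∧ p j = q) ∧ q < p a ∧
        p a + 2 ^ a ≤ q + 2 ^ (T + 1) := by
  have key : ∀ d a, a ∈ Set.Ico f n → n - a ≤ d → ∀ T, a ≤ T →
      ∃ q, (q = 0 ∨ ∃ j ∈ Set.Ico f n, T < j ∧ p j = q) ∧ q < p a ∧
        p a + 2 ^ a ≤ q + 2 ^ (T + 1) := by
    intro d
    induction d with
    | zero =>
      intro a ha hd
      simp only [Set.mem_Ico] at ha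
      omega
    | succ d ih =>
      intro a ha hd T haT
      have ha' := ha
      simp only [Set.mem_Ico] at ha'
      obtain ⟨q₀, hq₀, hlt, hle⟩ := hgood a ha
      have hpowTa : (2:ℕ) ^ (a + 1) ≤ 2 ^ (T + 1) :=
        Nat.pow_le_pow_right (by norm_num) (by omega)
      have hpa2 : (2:ℕ) ^ (a + 1) = 2 ^ a + 2 ^ a := by ring
      rcases hq₀ with rfl | ⟨j, hj, haj, rfl⟩
      · exact ⟨0, Or.inl rfl, hlt, by omega⟩
      · by_cases hT : T < j
        · exact ⟨p j, Or.inr ⟨j, hj, hT, rfl⟩, hlt, by omega⟩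
        · have hj' := hj
          simp only [Set.mem_Ico] at hj'
          obtain ⟨q, hq, hqlt, hqle⟩ := ih j hj (by omega) T (by omega)
          have hpowaj : (2:ℕ) ^ (a + 1) ≤ 2 ^ j :=
            Nat.pow_le_pow_right (by norm_num) (by omega)
          have hpowj : (2:ℕ) ^ j ≤ 2 ^ j := le_rfl
          exact ⟨q, hq, by omega, by omega⟩
  intro a ha T haT
  exact key (n - a) a ha le_rfl T haT

def GoodCfg (n : ℕ) (C : Finset ℕ) : Prop :=
  0 ∈ C ∧ ∃ f p, f ≤ n ∧ Set.InjOn p (Set.Ico f n) ∧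
    ((C.erase 0 : Finset ℕ) : Set ℕ) = p '' Set.Ico f n ∧
    ∀ i ∈ Set.Ico f n, ∃ q,
      (q = 0 ∨ ∃ j ∈ Set.Ico f n, i < j ∧ p j = q) ∧ q < p i ∧ p i ≤ q + 2 ^ i

lemma goodcfg_insert (n : ℕ) (C : Finset ℕ) (i : ℕ) (hiC : i ∈ C) (hi1 : i + 1 ∉ C)
    (hcard : C.card ≤ n) (hI : GoodCfg n C) : GoodCfg n (insert (i + 1) C) := by
  obtain ⟨h0, f, p, hfn, hinj, himg, hgood⟩ := hI
  -- card computation to get f ≥ 1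
  have hcard1 : (C.erase 0).card = n - f := by
    have h1 : ((C.erase 0 : Finset ℕ) : Set ℕ).ncard = (p '' Set.Ico f n).ncard := by
      rw [himg]
    rw [Set.ncard_coe_finset] at h1
    rw [Set.ncard_image_of_injOn hinj] at h1
    rw [← Finset.coe_Ico, Set.ncard_coe_finset, Nat.card_Ico] at h1
    exact h1
  have hcard2 : (C.erase 0).card = C.card - 1 := Finset.card_erase_of_mem h0
  have hCpos : 1 ≤ C.card := Finset.card_pos.mpr ⟨0, h0⟩
  have hf1 : 1 ≤ f := by omega
  refine ⟨Finset.mem_insert_of_mem h0, f - 1, fun t => if t = f - 1 then i + 1 else p t,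
    by omega, ?_, ?_, ?_⟩
  · -- injectivity
    intro t₁ h₁ t₂ h₂ he
    simp only at he
    by_cases e₁ : t₁ = f - 1 <;> by_cases e₂ : t₂ = f - 1
    · omega
    · exfalso
      rw [if_pos e₁, if_neg e₂] at he
      simp only [Set.mem_Ico] at h₂
      have : p t₂ ∈ (C.erase 0 : Finset ℕ) := by
        rw [← Finset.mem_coe, himg]
        exact ⟨t₂, Set.mem_Ico.mpr ⟨by omega, h₂.2⟩, rfl⟩
      rw [← he] at this
      exact hi1 (Finset.mem_of_mem_erase this)
    · exfalso
      rw [if_neg e₁, if_pos e₂] at he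
      simp only [Set.mem_Ico] at h₁
      have : p t₁ ∈ (C.erase 0 : Finset ℕ) := by
        rw [← Finset.mem_coe, himg]
        exact ⟨t₁, Set.mem_Ico.mpr ⟨by omega, h₁.2⟩, rfl⟩
      rw [he] at this
      exact hi1 (Finset.mem_of_mem_erase this)
    · rw [if_neg e₁, if_neg e₂] at he
      simp only [Set.mem_Ico] at h₁ h₂
      exact hinj (Set.mem_Ico.mpr ⟨by omega, h₁.2⟩) (Set.mem_Ico.mpr ⟨by omega, h₂.2⟩) he
  · -- image
    ext x
    simp only [Finset.coe_erase, Set.mem_diff, Finset.mem_coe, Finset.mem_insert,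
      Set.mem_singleton_iff, Set.mem_image, Set.mem_Ico]
    constructor
    · rintro ⟨hx, hx0⟩
      rcases hx with rfl | hx
      · refine ⟨f - 1, ⟨le_rfl, by omega⟩, by simp⟩
      · have : x ∈ p '' Set.Ico f n := by
          rw [← himg]
          simp only [Finset.coe_erase, Set.mem_diff, Finset.mem_coe, Set.mem_singleton_iff]
          exact ⟨hx, hx0⟩
        obtain ⟨t, ht, rfl⟩ := this
        simp only [Set.mem_Ico] at ht
        refine ⟨t, ⟨by omega, ht.2⟩, ?_⟩
        rw [if_neg (by omega)]
    · rintro ⟨t, ht, rfl⟩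
      by_cases e : t = f - 1
      · rw [if_pos e]
        exact ⟨Or.inl rfl, by omega⟩
      · rw [if_neg e]
        have : p t ∈ (↑(C.erase 0) : Set ℕ) := by
          rw [himg]
          exact ⟨t, Set.mem_Ico.mpr ⟨by omega, ht.2⟩, rfl⟩
        simp only [Finset.coe_erase, Set.mem_diff, Finset.mem_coe,
          Set.mem_singleton_iff] at this
        exact ⟨Or.inr this.1, this.2⟩
  · -- good condition
    intro t ht
    simp only [Set.mem_Ico] at ht
    by_cases e : t = f - 1
    · subst e
      beta_reduce
      rw [if_pos rfl]
      by_cases hi0 : i = 0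
      · refine ⟨0, Or.inl rfl, by omega, ?_⟩
        have : 1 ≤ 2 ^ (f - 1) := Nat.one_le_two_pow
        omega
      · have : i ∈ (↑(C.erase 0) : Set ℕ) := by
          simp only [Finset.coe_erase, Set.mem_diff, Finset.mem_coe, Set.mem_singleton_iff]
          exact ⟨hiC, hi0⟩
        rw [himg] at this
        obtain ⟨a, ha, hpa⟩ := this
        have ha' := ha
        simp only [Set.mem_Ico] at ha'
        refine ⟨i, Or.inr ⟨a, Set.mem_Ico.mpr ⟨by omega, ha'.2⟩, by omega, ?_⟩, by omega, ?_⟩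
        · rw [if_neg (by omega)]; exact hpa
        · have : 1 ≤ 2 ^ (f - 1) := Nat.one_le_two_pow
          omega
    · have htmem : t ∈ Set.Ico f n := Set.mem_Ico.mpr ⟨by omega, ht.2⟩
      obtain ⟨q, hq, hlt, hle⟩ := hgood t htmem
      simp only [if_neg e]
      refine ⟨q, ?_, hlt, hle⟩
      rcases hq with rfl | ⟨j, hj, htj, rfl⟩
      · exact Or.inl rfl
      · have hj' := hj
        simp only [Set.mem_Ico] at hj'
        refine Or.inr ⟨j, Set.mem_Ico.mpr ⟨by omega, hj'.2⟩, htj, ?_⟩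
        rw [if_neg (by omega)]

lemma goodcfg_erase (n : ℕ) (C : Finset ℕ) (i : ℕ) (hiC : i ∈ C) (hi1 : i + 1 ∈ C)
    (hI : GoodCfg n C) : GoodCfg n (C.erase (i + 1)) := by
  obtain ⟨h0, f, p, hfn, hinj, himg, hgood⟩ := hI
  have hmem : (i + 1 : ℕ) ∈ (↑(C.erase 0) : Set ℕ) := by
    simp only [Finset.coe_erase, Set.mem_diff, Finset.mem_coe, Set.mem_singleton_iff]
    exact ⟨hi1, by omega⟩
  rw [himg] at hmem
  obtain ⟨m, hm, hpm⟩ := hmem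
  have hmlo : f ≤ m := (Set.mem_Ico.mp hm).1
  have hmhi : m < n := (Set.mem_Ico.mp hm).2
  refine ⟨Finset.mem_erase.mpr ⟨by omega, h0⟩, f + 1,
    fun t => p (if t ≤ m then t - 1 else t), by omega, ?_, ?_, ?_⟩
  · -- InjOn
    intro t₁ h₁ t₂ h₂ he
    simp only [Set.mem_Ico] at h₁ h₂
    simp only at he
    have m₁ : (if t₁ ≤ m then t₁ - 1 else t₁) ∈ Set.Ico f n := by
      simp only [Set.mem_Ico]; split_ifs <;> omega
    have m₂ : (if t₂ ≤ m then t₂ - 1 else t₂) ∈ Set.Ico f n := by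
      simp only [Set.mem_Ico]; split_ifs <;> omega
    have e := hinj m₁ m₂ he
    split_ifs at e <;> omega
  · -- image
    ext x
    simp only [Finset.coe_erase, Set.mem_diff, Finset.mem_coe, Finset.mem_erase,
      Set.mem_singleton_iff, Set.mem_image, Set.mem_Ico]
    constructor
    · rintro ⟨⟨hxC, hxne⟩, hx0⟩
      have hx : x ∈ p '' Set.Ico f n := by
        rw [← himg]
        simp only [Finset.coe_erase, Set.mem_diff, Finset.mem_coe, Set.mem_singleton_iff]
        exact ⟨hxC, hx0⟩
      obtain ⟨j, hj, rfl⟩ := hx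
      simp only [Set.mem_Ico] at hj
      have hjm : j ≠ m := by rintro rfl; exact hxne hpm
      refine ⟨if j < m then j + 1 else j, ⟨by split_ifs <;> omega, by split_ifs <;> omega⟩, ?_⟩
      beta_reduce
      have e : (if (if j < m then j + 1 else j) ≤ m then (if j < m then j + 1 else j) - 1
          else (if j < m then j + 1 else j)) = j := by split_ifs <;> omega
      rw [e]
    · rintro ⟨t, ⟨ht1, ht2⟩, rfl⟩
      beta_reduce
      have hot : (if t ≤ m then t - 1 else t) ∈ Set.Ico f n := by
        simp only [Set.mem_Ico]; split_ifs <;> omega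
      have hotm : (if t ≤ m then t - 1 else t) ≠ m := by split_ifs <;> omega
      have hmem2 : p (if t ≤ m then t - 1 else t) ∈ (↑(C.erase 0) : Set ℕ) := by
        rw [himg]; exact ⟨_, hot, rfl⟩
      simp only [Finset.coe_erase, Set.mem_diff, Finset.mem_coe,
        Set.mem_singleton_iff] at hmem2
      exact ⟨⟨hmem2.1, fun he => hotm (hinj hot hm (he.trans hpm.symm))⟩, hmem2.2⟩
  · -- good condition
    intro t ht
    simp only [Set.mem_Ico] at ht
    beta_reduce
    have hot : (if t ≤ m then t - 1 else t) ∈ Set.Ico f n := by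
      simp only [Set.mem_Ico]; split_ifs <;> omega
    obtain ⟨q₀, hq₀, hlt₀, hle₀⟩ := hgood _ hot
    rcases hq₀ with rfl | ⟨j, hj, hoj, rfl⟩
    · refine ⟨0, Or.inl rfl, hlt₀, ?_⟩
      have hpow : (2:ℕ) ^ (if t ≤ m then t - 1 else t) ≤ 2 ^ t :=
        Nat.pow_le_pow_right (by norm_num) (by split_ifs <;> omega)
      omega
    · simp only [Set.mem_Ico] at hj
      by_cases hjm : j = m
      · rw [hjm] at hoj hlt₀ hle₀
        rw [hpm] at hlt₀ hle₀
        have hcase : t ≤ m := by split_ifs at hoj <;> omega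
        rw [if_pos hcase] at hlt₀ hle₀ ⊢
        have h2t : (2:ℕ) ^ t = 2 ^ (t - 1) + 2 ^ (t - 1) := by
          obtain ⟨s, rfl⟩ : ∃ s, t = s + 1 := ⟨t - 1, by omega⟩
          simp only [Nat.add_sub_cancel, pow_succ]
          ring
        have h1t : (1:ℕ) ≤ 2 ^ (t - 1) := Nat.one_le_two_pow
        by_cases hi0 : i = 0
        · subst hi0
          exact ⟨0, Or.inl rfl, by omega, by omega⟩
        · have hiim : i ∈ (↑(C.erase 0) : Set ℕ) := by
            simp only [Finset.coe_erase, Set.mem_diff, Finset.mem_coe, Set.mem_singleton_iff]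
            exact ⟨hiC, hi0⟩
          rw [himg] at hiim
          obtain ⟨a, ha, hpa⟩ := hiim
          simp only [Set.mem_Ico] at ha
          have ham : a ≠ m := by rintro rfl; rw [hpm] at hpa; omega
          by_cases hao : t - 1 < a
          · refine ⟨i, Or.inr ⟨if a < m then a + 1 else a,
              ⟨by split_ifs <;> omega, by split_ifs <;> omega⟩, by split_ifs <;> omega, ?_⟩,
              by omega, by omega⟩
            have e : (if (if a < m then a + 1 else a) ≤ m then (if a < m then a + 1 else a) - 1
                else (if a < m then a + 1 else a)) = a := by split_ifs <;> omega
            rw [e]; exact hpa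
          · have hane : a ≠ t - 1 := by rintro rfl; omega
            have halt : a < t - 1 := by omega
            have haT : a ≤ t - 1 - 1 := by omega
            have hamem : a ∈ Set.Ico f n := Set.mem_Ico.mpr ⟨ha.1, ha.2⟩
            have e1 : t - 1 - 1 + 1 = t - 1 := by omega
            obtain ⟨q, hq, hqlt, hqle⟩ := chain_lemma f n p hgood a hamem (t - 1 - 1) haT
            rw [e1] at hqle
            have h1a : (1:ℕ) ≤ 2 ^ a := Nat.one_le_two_pow
            have g1 : q < p (t - 1) := by omega
            have g2 : p (t - 1) ≤ q + 2 ^ t := by omega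
            refine ⟨q, ?_, g1, g2⟩
            rcases hq with rfl | ⟨j', hj', hTj', rfl⟩
            · exact Or.inl rfl
            · simp only [Set.mem_Ico] at hj'
              have hj'net : j' ≠ t - 1 := by rintro rfl; omega
              have hj'gt : t - 1 < j' := by omega
              have hj'm : j' ≠ m := by rintro rfl; rw [hpm] at hqlt; omega
              refine Or.inr ⟨if j' < m then j' + 1 else j',
                ⟨by split_ifs <;> omega, by split_ifs <;> omega⟩, by split_ifs <;> omega, ?_⟩
              have e : (if (if j' < m then j' + 1 else j') ≤ m then (if j' < m then j' + 1 else j') - 1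
                  else (if j' < m then j' + 1 else j')) = j' := by split_ifs <;> omega
              rw [e]
      · refine ⟨p j, Or.inr ⟨if j < m then j + 1 else j,
          ⟨by split_ifs <;> omega, by split_ifs <;> omega⟩, ?_, ?_⟩, hlt₀, ?_⟩
        · split_ifs at hoj ⊢ <;> omega
        · have e : (if (if j < m then j + 1 else j) ≤ m then (if j < m then j + 1 else j) - 1
              else (if j < m then j + 1 else j)) = j := by split_ifs <;> omega
          rw [e]
        · have hpow : (2:ℕ) ^ (if t ≤ m then t - 1 else t) ≤ 2 ^ t :=
            Nat.pow_le_pow_right (by norm_num) (by split_ifs <;> omega)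
          omega

lemma realizable_goodcfg (n : ℕ) (C : Finset ℕ) (h : Realizable n C) : GoodCfg n C := by
  induction h with
  | refl =>
    refine ⟨Finset.mem_singleton_self 0, n, fun _ => 0, le_rfl, ?_, ?_, ?_⟩
    · simp [Set.InjOn]
    · simp
    · simp
  | tail _ hmv ih =>
    rcases hmv with ⟨i, hiC, hi1, hcard, rfl⟩ | ⟨i, hiC, hi1, rfl⟩
    · exact goodcfg_insert n _ i hiC hi1 hcard ih
    · exact goodcfg_erase n _ i hiC hi1 ih

theorem position_upper_bound' (f n : ℕ) (P : Finset ℕ) (p : ℕ → ℕ)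
    (hinj : Set.InjOn p (Set.Ico f n))
    (himg : (P : Set ℕ) = p '' Set.Ico f n)
    (hgood : ∀ i ∈ Set.Ico f n, ∃ q,
      (q = 0 ∨ ∃ j ∈ Set.Ico f n, i < j ∧ p j = q) ∧ q < p i ∧ p i ≤ q + 2 ^ i) :
    ((∀ x ∈ P, x ≤ ∑ k ∈ Finset.Ico f n, 2 ^ k) ∧
      ∑ k ∈ Finset.Ico f n, 2 ^ k ≤ 2 ^ n - 1) ∧
    (∀ C : Finset ℕ, Realizable n C → ∀ x ∈ C, x ≤ 2 ^ n - 1) := by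
  constructor
  · constructor
    · intro x hx
      have hx' : x ∈ p '' Set.Ico f n := by rw [← himg]; exact hx
      obtain ⟨i, hi, rfl⟩ := hx'
      have h1 := bound_aux f n p hgood i hi
      have h2 : ∑ k ∈ Finset.Ico i n, 2 ^ k ≤ ∑ k ∈ Finset.Ico f n, 2 ^ k := by
        apply Finset.sum_le_sum_of_subset
        exact Finset.Ico_subset_Ico (Set.mem_Ico.mp hi).1 le_rfl
      omega
    · exact sum_pow_le f n
  · intro C hC x hx
    obtain ⟨h0, f', p', hfn', hinj', himg', hgood'⟩ := realizable_goodcfg n C hC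
    by_cases hx0 : x = 0
    · omega
    · have : x ∈ (↑(C.erase 0) : Set ℕ) := by
        simp only [Finset.coe_erase, Set.mem_diff, Finset.mem_coe, Set.mem_singleton_iff]
        exact ⟨hx, hx0⟩
      rw [himg'] at this
      obtain ⟨i, hi, rfl⟩ := this
      have h1 := bound_aux f' n p' hgood' i hi
      have h2 := sum_pow_le i n
      omega

/-- If the placed pebbles `P` (with `f` free pebbles) are numbered `f, …, n-1`
by `p`, pebble `i` having a higher-numbered pebble (or node `0`) at most `2 ^ i`
positions to its left, then the rightmost placed pebble is on a node at most
`2 ^ f + 2 ^ (f+1) + ⋯ + 2 ^ (n-1) ≤ 2 ^ n - 1`; in particular any realizable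
configuration with `n` pebbles has all pebbles on nodes `≤ 2 ^ n - 1`. -/
theorem position_upper_bound (f n : ℕ) (P : Finset ℕ) (p : ℕ → ℕ)
    (hinj : Set.InjOn p (Set.Ico f n))
    (himg : (P : Set ℕ) = p '' Set.Ico f n)
    (hgood : ∀ i ∈ Set.Ico f n, ∃ q,
      (q = 0 ∨ ∃ j ∈ Set.Ico f n, i < j ∧ p j = q) ∧ q < p i ∧ p i ≤ q + 2 ^ i) :
    ((∀ x ∈ P, x ≤ ∑ k ∈ Finset.Ico f n, 2 ^ k) ∧
      ∑ k ∈ Finset.Ico f n, 2 ^ k ≤ 2 ^ n - 1) ∧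
    (∀ C : Finset ℕ, Realizable n C → ∀ x ∈ C, x ≤ 2 ^ n - 1) := by
  exact position_upper_bound' f n P p hinj himg hgood
end

section
/- In the m-erasure reversible pebble game there is a winning strategy reaching node m·2^n using n+2 pebbles and at most m-1 erasures, for all m ≥ 1 and n ≥ 0. -/
/-- Configurations reachable in the erasure pebble game with at most `p`
movable pebbles, together with the number of erasures performed. A
configuration is the set of occupied nodes, always containing the permanently
pebbled node `0`. Placing requires a free pebble (`C.card ≤ p`, as node `0`
does not count) and node `i` pebbled; removing the pebble from `i+1` requires
node `i` pebbled; an *erasure* removes a pebble from a node `i > 1` whose left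
neighbour `i-1` is not pebbled. -/
inductive EReach (p : ℕ) : Finset ℕ → ℕ → Prop where
  | init : EReach p {0} 0
  | place {C : Finset ℕ} {e i : ℕ} : EReach p C e → i ∈ C → i + 1 ∉ C →
      C.card ≤ p → EReach p (insert (i + 1) C) e
  | remove {C : Finset ℕ} {e i : ℕ} : EReach p C e → i ∈ C → i + 1 ∈ C →
      EReach p (C.erase (i + 1)) e
  | erase {C : Finset ℕ} {e i : ℕ} : EReach p C e → i ∈ C → 2 ≤ i →
      i - 1 ∉ C → EReach p (C.erase i) (e + 1)

theorem trav_untrav (p k : ℕ) :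
    (∀ C e a, EReach p C e → a ∈ C →
      (∀ j, a < j → j ≤ a + 2^k → j ∉ C) → C.card + k ≤ p →
      EReach p (insert (a + 2^k) C) e) ∧
    (∀ C e a, EReach p C e → a ∈ C → a + 2^k ∈ C →
      (∀ j, a < j → j < a + 2^k → j ∉ C) → C.card + k ≤ p + 1 →
      EReach p (C.erase (a + 2^k)) e) := by
  induction k with
  | zero =>
    refine ⟨fun C e a h ha hint hcard => ?_, fun C e a h ha hb _ _ => h.remove ha hb⟩
    exact h.place ha (hint (a+1) (by omega) (by omega)) (by omega)
  | succ k ih =>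
    obtain ⟨trav, untrav⟩ := ih
    have hpow : 2^(k+1) = 2^k + 2^k := by rw [pow_succ]; omega
    have hpos : 1 ≤ 2^k := Nat.one_le_two_pow
    constructor
    · intro C e a h ha hint hcard
      have hnc : a + 2^k ∉ C := hint _ (by omega) (by omega)
      have h1 : EReach p (insert (a + 2^k) C) e :=
        trav C e a h ha (fun j h1 h2 => hint j h1 (by omega)) (by omega)
      have hcard1 : (insert (a + 2^k) C).card = C.card + 1 :=
        Finset.card_insert_of_notMem hnc
      have h2 : EReach p (insert (a + 2^k + 2^k) (insert (a + 2^k) C)) e := by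
        refine trav _ e (a + 2^k) h1 (Finset.mem_insert_self _ _) ?_ (by omega)
        intro j hj1 hj2 hjmem
        rcases Finset.mem_insert.1 hjmem with h' | h'
        · omega
        · exact hint j (by omega) (by omega) h'
      rw [show a + 2^k + 2^k = a + 2^(k+1) by omega] at h2
      have h3 : EReach p ((insert (a + 2^(k+1)) (insert (a + 2^k) C)).erase (a + 2^k)) e := by
        refine untrav _ e a h2 ?_ ?_ ?_ ?_
        · exact Finset.mem_insert_of_mem (Finset.mem_insert_of_mem ha)
        · exact Finset.mem_insert_of_mem (Finset.mem_insert_self _ _)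
        · intro j hj1 hj2 hjmem
          rcases Finset.mem_insert.1 hjmem with h' | h'
          · omega
          rcases Finset.mem_insert.1 h' with h'' | h''
          · omega
          · exact hint j (by omega) (by omega) h''
        · rw [Finset.card_insert_of_notMem, hcard1]
          · omega
          · simp only [Finset.mem_insert]
            push_neg
            exact ⟨by omega, fun h' => hint _ (by omega) (by omega) h'⟩
      rwa [Finset.erase_insert_of_ne (by omega), Finset.erase_insert hnc] at h3
    · intro C e a h ha hb hint hcard
      have hnc : a + 2^k ∉ C := hint _ (by omega) (by omega)
      have h1 : EReach p (insert (a + 2^k) C) e := by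
        refine trav C e a h ha ?_ (by omega)
        intro j hj1 hj2
        exact hint j (by omega) (by omega)
      have hcard1 : (insert (a + 2^k) C).card = C.card + 1 :=
        Finset.card_insert_of_notMem hnc
      have h2 : EReach p ((insert (a + 2^k) C).erase (a + 2^k + 2^k)) e := by
        refine untrav _ e (a + 2^k) h1 (Finset.mem_insert_self _ _) ?_ ?_ (by omega)
        · rw [show a + 2^k + 2^k = a + 2^(k+1) by omega]
          exact Finset.mem_insert_of_mem hb
        · intro j hj1 hj2 hjmem
          rcases Finset.mem_insert.1 hjmem with h' | h'
          · omega
          · exact hint j (by omega) (by omega) h'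
      rw [show a + 2^k + 2^k = a + 2^(k+1) by omega] at h2
      have h3 : EReach p (((insert (a + 2^k) C).erase (a + 2^(k+1))).erase (a + 2^k)) e := by
        refine untrav _ e a h2 ?_ ?_ ?_ ?_
        · exact Finset.mem_erase.2 ⟨by omega, Finset.mem_insert_of_mem ha⟩
        · exact Finset.mem_erase.2 ⟨by omega, Finset.mem_insert_self _ _⟩
        · intro j hj1 hj2 hjmem
          have h' := Finset.mem_of_mem_erase hjmem
          rcases Finset.mem_insert.1 h' with h'' | h''
          · omega
          · exact hint j (by omega) (by omega) h''
        · rw [Finset.card_erase_of_mem (Finset.mem_insert_of_mem hb), hcard1]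
          omega
      rwa [Finset.erase_right_comm, Finset.erase_insert hnc] at h3

theorem anchor (n : ℕ) : ∀ k, 1 ≤ k →
    ∃ e, EReach (n+2) (insert (k * 2^n) {0}) e ∧ e ≤ k - 1 := by
  have hpos : 1 ≤ 2^n := Nat.one_le_two_pow
  intro k
  induction k with
  | zero => omega
  | succ k ih =>
    intro _
    rcases Nat.eq_or_lt_of_le (Nat.one_le_iff_ne_zero.2 (Nat.succ_ne_zero k)) with h1 | h1
    · -- k + 1 = 1
      have hk : k = 0 := by omega
      subst hk
      refine ⟨0, ?_, by omega⟩
      have := (trav_untrav (n+2) n).1 {0} 0 0 EReach.init (Finset.mem_singleton_self 0)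
        (fun j hj1 hj2 hj => by simp at hj; omega) (by simp; omega)
      simpa using this
    · -- k ≥ 1
      obtain ⟨e, he, hle⟩ := ih (by omega)
      set a := k * 2^n with ha
      have hapos : 0 < a := Nat.mul_pos (by omega) (by omega)
      have hmem : a ∈ insert a ({0} : Finset ℕ) := Finset.mem_insert_self _ _
      have hcard : (insert a ({0}:Finset ℕ)).card = 2 := by
        rw [Finset.card_insert_of_notMem (by simp; omega)]; simp
      have h2 : EReach (n+2) (insert (a + 2^n) (insert a {0})) e := by
        refine (trav_untrav (n+2) n).1 _ e a he hmem ?_ (by omega)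
        intro j hj1 hj2 hj
        rcases Finset.mem_insert.1 hj with h' | h'
        · omega
        · simp at h'; omega
      have hstep : (k+1) * 2^n = a + 2^n := by rw [ha, Nat.succ_mul]
      have hkey : (insert (a + 2^n) (insert a ({0}:Finset ℕ))).erase a
          = insert ((k+1) * 2^n) {0} := by
        rw [Finset.erase_insert_of_ne (by omega), Finset.erase_insert (by simp; omega), hstep]
      rcases Nat.lt_or_ge a 2 with h2a | h2a
      · -- a = 1: remove normally using node 0
        refine ⟨e, ?_, by omega⟩
        have hr := EReach.remove (i := 0) h2 (by simp) (by simp; omega)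
        rw [show (0:ℕ)+1 = a by omega, hkey] at hr
        exact hr
      · -- a ≥ 2: erase
        refine ⟨e+1, ?_, by omega⟩
        have hr := EReach.erase (i := a) h2
          (Finset.mem_insert_of_mem (Finset.mem_insert_self _ _)) h2a
          (by simp only [Finset.mem_insert, Finset.mem_singleton]; push_neg
              exact ⟨by omega, by omega, by omega⟩)
        rwa [hkey] at hr

/-- In the `m`-erasure reversible pebble game there is a winning strategy
reaching node `m * 2 ^ n` using `n + 2` pebbles and at most `m - 1` erasures. -/
theorem erasure_game_winning_strategy (m n : ℕ) (hm : 1 ≤ m) :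
    ∃ (C : Finset ℕ) (e : ℕ),
      EReach (n + 2) C e ∧ m * 2 ^ n ∈ C ∧ e ≤ m - 1 := by

  obtain ⟨e, he, hle⟩ := anchor n m hm
  exact ⟨_, e, he, Finset.mem_insert_self _ _, hle⟩
end

section
/- Space-irreversibility trade-off, part (i): the reversible pebble game of length 2^n - 1 (no erasures allowed) can be won using n pebbles but cannot be won using n-1 pebbles, for all n ≥ 1. -/
def PStep (p : ℕ) (C D : Finset ℕ) : Prop :=
  (∃ i, i ∈ C ∧ i + 1 ∉ C ∧ C.card ≤ p ∧ D = insert (i + 1) C) ∨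
  (∃ i, i ∈ C ∧ i + 1 ∈ C ∧ D = C.erase (i + 1))
abbrev PReach (p : ℕ) : Finset ℕ → Finset ℕ → Prop := Relation.ReflTransGen (PStep p)
lemma pstep_card {p : ℕ} {C D : Finset ℕ} (h : PStep p C D) (hc : C.card ≤ p + 1) :
    D.card ≤ p + 1 := by
  rcases h with ⟨i, _, _, hcp, rfl⟩ | ⟨i, _, _, rfl⟩
  · calc (insert (i+1) C).card ≤ C.card + 1 := Finset.card_insert_le _ _
      _ ≤ p + 1 := by omega
  · exact le_trans (Finset.card_le_card (Finset.erase_subset _ _)) hc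
lemma pstep_symm {p : ℕ} {C D : Finset ℕ} (h : PStep p C D) (hc : C.card ≤ p + 1) :
    PStep p D C := by
  rcases h with ⟨i, hi, hi1, hcp, rfl⟩ | ⟨i, hi, hi1, rfl⟩
  · refine Or.inr ⟨i, Finset.mem_insert_of_mem hi, Finset.mem_insert_self _ _, ?_⟩
    rw [Finset.erase_insert hi1]
  · refine Or.inl ⟨i, Finset.mem_erase_of_ne_of_mem (by omega) hi,
      fun hmem => (Finset.mem_erase.mp hmem).1 rfl, ?_, ?_⟩
    · have : (C.erase (i+1)).card + 1 = C.card := Finset.card_erase_add_one hi1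
      omega
    · rw [Finset.insert_erase hi1]

def psiF (h : ℕ) (C : Finset ℕ) : Finset ℕ :=
  insert 0 ((C.filter (fun x => h ≤ x)).image (fun x => x - h))
def lowF (h : ℕ) (C : Finset ℕ) : Finset ℕ := C.filter (fun x => x ≤ h)
lemma mem_psiF {h z : ℕ} {C : Finset ℕ} :
    z ∈ psiF h C ↔ z = 0 ∨ ∃ y ∈ C, h ≤ y ∧ y - h = z := by
  simp only [psiF, Finset.mem_insert, Finset.mem_image, Finset.mem_filter]
  constructor
  · rintro (rfl | ⟨y, ⟨hy, hyh⟩, rfl⟩)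
    · exact Or.inl rfl
    · exact Or.inr ⟨y, hy, hyh, rfl⟩
  · rintro (rfl | ⟨y, hy, hyh, rfl⟩)
    · exact Or.inl rfl
    · exact Or.inr ⟨y, ⟨hy, hyh⟩, rfl⟩
lemma psi_insert_low {h x : ℕ} (hx : x ≤ h) (C : Finset ℕ) :
    psiF h (insert x C) = psiF h C := by
  ext z
  simp only [mem_psiF, Finset.mem_insert]
  constructor
  · rintro (rfl | ⟨y, (rfl | hy), hyh, rfl⟩)
    · exact Or.inl rfl
    · left; omega
    · exact Or.inr ⟨y, hy, hyh, rfl⟩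
  · rintro (rfl | ⟨y, hy, hyh, rfl⟩)
    · exact Or.inl rfl
    · exact Or.inr ⟨y, Or.inr hy, hyh, rfl⟩
lemma psi_erase_low {h x : ℕ} (hx : x ≤ h) (C : Finset ℕ) :
    psiF h (C.erase x) = psiF h C := by
  ext z
  simp only [mem_psiF, Finset.mem_erase]
  constructor
  · rintro (rfl | ⟨y, ⟨hne, hy⟩, hyh, rfl⟩)
    · exact Or.inl rfl
    · exact Or.inr ⟨y, hy, hyh, rfl⟩
  · rintro (rfl | ⟨y, hy, hyh, rfl⟩)
    · exact Or.inl rfl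
    · by_cases hxy : y = x
      · left; omega
      · exact Or.inr ⟨y, ⟨hxy, hy⟩, hyh, rfl⟩
lemma psi_insert_high {h x : ℕ} (hx : h < x) (C : Finset ℕ) :
    psiF h (insert x C) = insert (x - h) (psiF h C) := by
  ext z
  simp only [mem_psiF, Finset.mem_insert]
  constructor
  · rintro (rfl | ⟨y, (rfl | hy), hyh, rfl⟩)
    · exact Or.inr (Or.inl rfl)
    · exact Or.inl rfl
    · exact Or.inr (Or.inr ⟨y, hy, hyh, rfl⟩)
  · rintro (rfl | rfl | ⟨y, hy, hyh, rfl⟩)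
    · exact Or.inr ⟨x, Or.inl rfl, by omega, rfl⟩
    · exact Or.inl rfl
    · exact Or.inr ⟨y, Or.inr hy, hyh, rfl⟩
lemma psi_erase_high {h x : ℕ} (hx : h < x) (C : Finset ℕ) :
    psiF h (C.erase x) = (psiF h C).erase (x - h) := by
  ext z
  simp only [mem_psiF, Finset.mem_erase]
  constructor
  · rintro (rfl | ⟨y, ⟨hne, hy⟩, hyh, rfl⟩)
    · exact ⟨by omega, Or.inl rfl⟩
    · exact ⟨by omega, Or.inr ⟨y, hy, hyh, rfl⟩⟩
  · rintro ⟨hne, (rfl | ⟨y, hy, hyh, rfl⟩)⟩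
    · exact Or.inl rfl
    · exact Or.inr ⟨y, ⟨by omega, hy⟩, hyh, rfl⟩
lemma mem_psi_of_mem {h x : ℕ} {C : Finset ℕ} (hx : x ∈ C) (hhx : h ≤ x) :
    x - h ∈ psiF h C :=
  mem_psiF.mpr (Or.inr ⟨x, hx, hhx, rfl⟩)
lemma notMem_psi {h x : ℕ} {C : Finset ℕ} (hx : x ∉ C) (hhx : h < x) :
    x - h ∉ psiF h C := by
  intro hmem
  rcases mem_psiF.mp hmem with h0 | ⟨y, hy, hyh, heq⟩
  · omega
  · have : y = x := by omega
    exact hx (this ▸ hy)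
lemma low_insert_le {h x : ℕ} (hx : x ≤ h) (C : Finset ℕ) :
    lowF h (insert x C) = insert x (lowF h C) := by
  simp [lowF, Finset.filter_insert, hx]
lemma low_insert_gt {h x : ℕ} (hx : h < x) (C : Finset ℕ) :
    lowF h (insert x C) = lowF h C := by
  simp [lowF, Finset.filter_insert, Nat.not_le.mpr hx]
lemma low_erase {h x : ℕ} (C : Finset ℕ) :
    lowF h (C.erase x) = (lowF h C).erase x := by
  simp [lowF, Finset.filter_erase]
lemma low_erase_gt {h x : ℕ} (hx : h < x) (C : Finset ℕ) :
    lowF h (C.erase x) = lowF h C := by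
  rw [low_erase]
  apply Finset.erase_eq_of_notMem
  intro hmem
  have := (Finset.mem_filter.mp hmem).2
  omega
lemma low_subset {h : ℕ} {C : Finset ℕ} : lowF h C ⊆ C := Finset.filter_subset _ _
lemma mem_low {h x : ℕ} {C : Finset ℕ} (hx : x ∈ C) (hxh : x ≤ h) : x ∈ lowF h C :=
  Finset.mem_filter.mpr ⟨hx, hxh⟩
lemma card_psi_le (h : ℕ) (C : Finset ℕ) :
    (psiF h C).card ≤ (C.filter (fun x => h ≤ x)).card + 1 :=
  le_trans (Finset.card_insert_le _ _) (by
    have := Finset.card_image_le (s := C.filter (fun x => h ≤ x)) (f := fun x => x - h)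
    omega)
lemma card_psi_of_mem {h : ℕ} {C : Finset ℕ} (hh : h ∈ C) :
    (psiF h C).card ≤ (C.filter (fun x => h ≤ x)).card := by
  have h0 : (0:ℕ) ∈ (C.filter (fun x => h ≤ x)).image (fun x => x - h) :=
    Finset.mem_image.mpr ⟨h, Finset.mem_filter.mpr ⟨hh, le_refl h⟩, by omega⟩
  rw [psiF, Finset.insert_eq_self.mpr h0]
  exact Finset.card_image_le
lemma card_filter_split (h : ℕ) (C : Finset ℕ) :
    (C.filter (fun x => h ≤ x)).card + (C.filter (fun x => ¬ h ≤ x)).card = C.card :=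
  Finset.card_filter_add_card_filter_not _
lemma low_eq_of_notMem {h : ℕ} {C : Finset ℕ} (hh : h ∉ C) :
    lowF h C = C.filter (fun x => ¬ h ≤ x) := by
  ext x
  simp only [lowF, Finset.mem_filter]
  constructor
  · rintro ⟨hx, hxh⟩
    refine ⟨hx, fun hge => hh ?_⟩
    have hxe : x = h := by omega
    exact hxe ▸ hx
  · rintro ⟨hx, hxh⟩
    exact ⟨hx, by omega⟩

/-- The key invariant of the reversible pebble game with `p` movable pebbles. -/
def PebInv : ℕ → Finset ℕ → Prop
  | 0, C => C = {0}
  | p + 1, C => 0 ∈ C ∧ C.card ≤ p + 2 ∧ PebInv p (psiF (2 ^ p) C) ∧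
      ((∃ x ∈ C, 2 ^ p < x) → ∃ D, PReach p (lowF (2 ^ p) C) D ∧ 2 ^ p ∈ D)

lemma pebinv_singleton : ∀ p, PebInv p ({0} : Finset ℕ)
  | 0 => rfl
  | p + 1 => by
    have h1 : ¬ ((2:ℕ)^p ≤ 0) := by
      have := Nat.one_le_two_pow (n := p); omega
    refine ⟨Finset.mem_singleton_self 0, by simp, ?_, ?_⟩
    · have he : psiF (2^p) ({0} : Finset ℕ) = {0} := by
        rw [psiF, Finset.filter_singleton, if_neg h1]
        simp
      rw [he]
      exact pebinv_singleton p
    · rintro ⟨x, hx, hlt⟩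
      rw [Finset.mem_singleton] at hx
      omega

theorem main_induction : ∀ p : ℕ,
    (∀ C, PebInv p C → ∀ x ∈ C, x + 1 ≤ 2 ^ p) ∧
    (∀ C D, PebInv p C → PStep p C D → PebInv p D) := by
  intro p
  induction p with
  | zero =>
    constructor
    · intro C hI x hx
      have hC : C = {0} := hI
      subst hC
      rw [Finset.mem_singleton] at hx
      omega
    · intro C D hI hS
      have hC : C = {0} := hI
      subst hC
      rcases hS with ⟨i, hi, _, hcard, _⟩ | ⟨i, hi, hi1, _⟩
      · simp at hcard
      · rw [Finset.mem_singleton] at hi hi1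
        omega
  | succ p ih =>
    obtain ⟨ihB, ihS⟩ := ih
    have ihReach : ∀ C D, PebInv p C → PReach p C D → PebInv p D := by
      intro C D hI hR
      induction hR with
      | refl => exact hI
      | tail _ hstep ih2 => exact ihS _ _ ih2 hstep
    have hpow : 1 ≤ (2:ℕ)^p := Nat.one_le_two_pow
    have hps : (2:ℕ)^(p+1) = 2^p + 2^p := by rw [pow_succ]; omega
    have hKey : ∀ D', PReach p {0} D' → 2^p ∈ D' → False := by
      intro D' hr hmem
      have hID' : PebInv p D' := ihReach _ _ (pebinv_singleton p) hr
      have := ihB _ hID' _ hmem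
      omega
    constructor
    · -- the bound
      intro C hI x hx
      obtain ⟨h0, hc, hψ, hlo⟩ := hI
      by_cases hxh : x ≤ 2^p
      · generalize (2:ℕ)^(p+1) = Q at *
        generalize (2:ℕ)^p = P at *
        omega
      · have hm : x - 2^p ∈ psiF (2^p) C := mem_psi_of_mem hx (by omega)
        have hb := ihB _ hψ _ hm
        generalize (2:ℕ)^(p+1) = Q at *
        generalize (2:ℕ)^p = P at *
        omega
    · -- closure under one step
      intro C D hI hS
      obtain ⟨h0, hc, hψ, hlo⟩ := hI
      rcases hS with ⟨i, hiC, hi1C, hcard, rfl⟩ | ⟨i, hiC, hi1C, rfl⟩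
      · -- PLACE
        by_cases hcmp : i + 1 ≤ 2^p
        · -- lower place
          refine ⟨Finset.mem_insert_of_mem h0,
            le_trans (Finset.card_insert_le _ _) (by omega), ?_, ?_⟩
          · rw [psi_insert_low hcmp]; exact hψ
          · intro hex
            have hexC : ∃ x ∈ C, 2^p < x := by
              obtain ⟨x, hx, hlt⟩ := hex
              rcases Finset.mem_insert.mp hx with rfl | hx'
              · omega
              · exact ⟨x, hx', hlt⟩
            obtain ⟨D0, hr, hD0⟩ := hlo hexC
            obtain ⟨u, hu, hult⟩ := hexC
            have hlow_card : (lowF (2^p) C).card + 1 ≤ C.card := by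
              have hsub : lowF (2^p) C ⊆ C.erase u := by
                intro y hy
                have hy' := Finset.mem_filter.mp hy
                exact Finset.mem_erase.mpr ⟨by omega, hy'.1⟩
              have h5 := Finset.card_le_card hsub
              have h6 := Finset.card_erase_add_one hu
              omega
            have hstep : PStep p (lowF (2^p) C) (insert (i+1) (lowF (2^p) C)) := by
              refine Or.inl ⟨i, mem_low hiC (by omega), ?_, by omega, rfl⟩
              intro hmem; exact hi1C (low_subset hmem)
            have hsymm := pstep_symm hstep (by omega)
            rw [low_insert_le hcmp]
            exact ⟨D0, Relation.ReflTransGen.head hsymm hr, hD0⟩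
        · -- upper place : 2^p ≤ i
          have hile : 2^p ≤ i := by omega
          have hcardψ : (psiF (2^p) C).card ≤ p := by
            by_cases hhC : 2^p ∈ C
            · have h1 := card_psi_of_mem hhC
              have h2 := card_filter_split (2^p) C
              have h3 : 0 ∈ C.filter (fun x => ¬ 2^p ≤ x) :=
                Finset.mem_filter.mpr ⟨h0, by omega⟩
              have h4 : 0 < (C.filter (fun x => ¬ 2^p ≤ x)).card :=
                Finset.card_pos.mpr ⟨0, h3⟩
              omega
            · have hexC : ∃ x ∈ C, 2^p < x := by
                refine ⟨i, hiC, ?_⟩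
                rcases Nat.lt_or_ge (2^p) i with h' | h'
                · exact h'
                · exact absurd (by omega : i = 2^p) (fun hh => hhC (hh ▸ hiC))
              have hlow2 : 2 ≤ (lowF (2^p) C).card := by
                by_contra hle
                push_neg at hle
                have h0l : 0 ∈ lowF (2^p) C := mem_low h0 (by omega)
                have hsingle : lowF (2^p) C = {0} := by
                  apply Finset.eq_singleton_iff_unique_mem.mpr
                  refine ⟨h0l, fun y hy => ?_⟩
                  exact Finset.card_le_one.mp (by omega) y hy 0 h0l
                obtain ⟨D0, hr, hD0⟩ := hlo hexC
                rw [hsingle] at hr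
                exact hKey D0 hr hD0
              have h1 := card_psi_le (2^p) C
              have h2 := card_filter_split (2^p) C
              rw [low_eq_of_notMem hhC] at hlow2
              omega
          have him : i - 2^p ∈ psiF (2^p) C := mem_psi_of_mem hiC hile
          have hnm : (i+1) - 2^p ∉ psiF (2^p) C := notMem_psi hi1C (by omega)
          have heq : (i - 2^p) + 1 = (i+1) - 2^p := by
            generalize (2:ℕ)^p = P at *
            omega
          have hstep : PStep p (psiF (2^p) C) (insert ((i+1) - 2^p) (psiF (2^p) C)) :=
            Or.inl ⟨i - 2^p, him, heq ▸ hnm, hcardψ, by rw [heq]⟩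
          refine ⟨Finset.mem_insert_of_mem h0,
            le_trans (Finset.card_insert_le _ _) (by omega), ?_, ?_⟩
          · rw [psi_insert_high (by omega)]
            exact ihS _ _ hψ hstep
          · intro _
            rw [low_insert_gt (by omega)]
            by_cases hieq : i = 2^p
            · exact ⟨lowF (2^p) C, .refl, mem_low (by rwa [hieq] at hiC) (le_refl _)⟩
            · exact hlo ⟨i, hiC, by omega⟩
      · -- REMOVE
        refine ⟨Finset.mem_erase.mpr ⟨by omega, h0⟩,
          le_trans (Finset.card_le_card (Finset.erase_subset _ _)) hc, ?_, ?_⟩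
        · -- psi component
          by_cases hcmp : i + 1 ≤ 2^p
          · rw [psi_erase_low hcmp]; exact hψ
          · have hile : 2^p ≤ i := by omega
            have him : i - 2^p ∈ psiF (2^p) C := mem_psi_of_mem hiC hile
            have him1 : (i+1) - 2^p ∈ psiF (2^p) C := mem_psi_of_mem hi1C (by omega)
            have heq : (i - 2^p) + 1 = (i+1) - 2^p := by
              generalize (2:ℕ)^p = P at *
              omega
            have hstep : PStep p (psiF (2^p) C) ((psiF (2^p) C).erase ((i+1) - 2^p)) :=
              Or.inr ⟨i - 2^p, him, heq ▸ him1, by rw [heq]⟩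
            rw [psi_erase_high (by omega)]
            exact ihS _ _ hψ hstep
        · -- low component
          intro hex
          have hexC : ∃ x ∈ C, 2^p < x := by
            obtain ⟨x, hx, hlt⟩ := hex
            exact ⟨x, (Finset.mem_erase.mp hx).2, hlt⟩
          by_cases hcmp : i + 1 ≤ 2^p
          · obtain ⟨D0, hr, hD0⟩ := hlo hexC
            obtain ⟨u, hu, hult⟩ := hexC
            have hlow_card : (lowF (2^p) C).card + 1 ≤ C.card := by
              have hsub : lowF (2^p) C ⊆ C.erase u := by
                intro y hy
                have hy' := Finset.mem_filter.mp hy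
                exact Finset.mem_erase.mpr ⟨by omega, hy'.1⟩
              have h5 := Finset.card_le_card hsub
              have h6 := Finset.card_erase_add_one hu
              omega
            have hstep : PStep p (lowF (2^p) C) ((lowF (2^p) C).erase (i+1)) :=
              Or.inr ⟨i, mem_low hiC (by omega), mem_low hi1C hcmp, rfl⟩
            have hsymm := pstep_symm hstep (by omega)
            rw [low_erase]
            exact ⟨D0, Relation.ReflTransGen.head hsymm hr, hD0⟩
          · rw [low_erase_gt (by omega)]
            exact hlo hexC

lemma preach_card {p : ℕ} {C D : Finset ℕ} (h : PReach p C D) (hc : C.card ≤ p + 1) :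
    D.card ≤ p + 1 := by
  induction h with
  | refl => exact hc
  | tail _ hstep ih => exact pstep_card hstep ih

lemma preach_symm {p : ℕ} {C D : Finset ℕ} (h : PReach p C D) (hc : C.card ≤ p + 1) :
    PReach p D C := by
  induction h with
  | refl => exact .refl
  | tail hr hstep ih =>
      exact Relation.ReflTransGen.head (pstep_symm hstep (preach_card hr hc)) ih

lemma ereach_to_preach {p : ℕ} {C : Finset ℕ} {e : ℕ} (h : EReach p C e) (he : e = 0) :
    PReach p {0} C := by
  induction h with
  | init => exact .refl
  | place _ hi hi1 hcp ih =>
      exact Relation.ReflTransGen.tail (ih he) (Or.inl ⟨_, hi, hi1, hcp, rfl⟩)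
  | remove _ hi hi1 ih =>
      exact Relation.ReflTransGen.tail (ih he) (Or.inr ⟨_, hi, hi1, rfl⟩)
  | erase _ _ _ _ _ => omega

lemma preach_to_ereach {p : ℕ} {C : Finset ℕ} (h : PReach p {0} C) : EReach p C 0 := by
  induction h with
  | refl => exact .init
  | tail _ hstep ih =>
      rcases hstep with ⟨i, hi, hi1, hcp, rfl⟩ | ⟨i, hi, hi1, rfl⟩
      · exact .place ih hi hi1 hcp
      · exact .remove ih hi hi1

def Dset (k a : ℕ) : Finset ℕ := (Finset.range k).image (fun j => a + 2 ^ k - 2 ^ j)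

lemma mem_Dset {k a y : ℕ} (hy : y ∈ Dset k a) : a < y ∧ y ≤ a + 2 ^ k - 1 := by
  rcases Finset.mem_image.mp hy with ⟨j, hj, rfl⟩
  have hj' : j < k := Finset.mem_range.mp hj
  have h1 : 2 ^ j < 2 ^ k := Nat.pow_lt_pow_right one_lt_two hj'
  have h2 : 1 ≤ 2 ^ j := Nat.one_le_two_pow
  generalize (2:ℕ) ^ j = x at *
  generalize (2:ℕ) ^ k = q at *
  omega

lemma card_Dset (k a : ℕ) : (Dset k a).card ≤ k := by
  calc (Dset k a).card ≤ (Finset.range k).card := Finset.card_image_le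
    _ = k := Finset.card_range k

lemma top_mem_Dset {k a : ℕ} (hk : 0 < k) : a + 2 ^ k - 1 ∈ Dset k a := by
  refine Finset.mem_image.mpr ⟨0, Finset.mem_range.mpr hk, by norm_num⟩

lemma Dset_succ (k a : ℕ) : Dset (k+1) a = insert (a + 2 ^ k) (Dset k (a + 2 ^ k)) := by
  have h2 : (2:ℕ) ^ (k+1) = 2 ^ k + 2 ^ k := by rw [pow_succ]; omega
  ext x
  simp only [Dset, Finset.mem_image, Finset.mem_range, Finset.mem_insert]
  constructor
  · rintro ⟨j, hj, rfl⟩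
    by_cases hjk : j = k
    · subst hjk; left
      generalize (2:ℕ) ^ (j+1) = Q at *
      generalize (2:ℕ) ^ j = P at *
      omega
    · right
      refine ⟨j, by omega, ?_⟩
      have h3 : (2:ℕ) ^ j ≤ 2 ^ k := Nat.pow_le_pow_right (by norm_num) (by omega)
      generalize (2:ℕ) ^ (k+1) = Q at *
      generalize (2:ℕ) ^ j = x at *
      generalize (2:ℕ) ^ k = P at *
      omega
  · rintro (h | ⟨j, hj, rfl⟩)
    · subst h
      refine ⟨k, Nat.lt_succ_self k, ?_⟩
      generalize (2:ℕ) ^ (k+1) = Q at *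
      generalize (2:ℕ) ^ k = P at *
      omega
    · refine ⟨j, by omega, ?_⟩
      have h3 : (2:ℕ) ^ j ≤ 2 ^ k := Nat.pow_le_pow_right (by norm_num) (le_of_lt hj)
      generalize (2:ℕ) ^ (k+1) = Q at *
      generalize (2:ℕ) ^ j = x at *
      generalize (2:ℕ) ^ k = P at *
      omega

lemma updown (p : ℕ) : ∀ (k : ℕ) (C : Finset ℕ) (a : ℕ), a ∈ C →
    (∀ x ∈ C, a < x → x ≤ a + 2 ^ k - 1 → False) →
    C.card + k ≤ p + 1 →
    PReach p C (C ∪ Dset k a) ∧ PReach p (C ∪ Dset k a) C := by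
  intro k
  induction k with
  | zero =>
      intro C a _ _ _
      simp only [Dset, Finset.range_zero, Finset.image_empty, Finset.union_empty]
      exact ⟨.refl, .refl⟩
  | succ k ih =>
      intro C a haC hfree hcard
      have h2 : (2:ℕ) ^ (k+1) = 2 ^ k + 2 ^ k := by rw [pow_succ]; omega
      have h1 : 1 ≤ (2:ℕ) ^ k := Nat.one_le_two_pow
      have hfree_a : ∀ x ∈ C, a < x → x ≤ a + 2 ^ k - 1 → False := by
        intro x hx h3 h4
        refine hfree x hx h3 ?_
        generalize (2:ℕ) ^ (k+1) = Q at *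
        generalize (2:ℕ) ^ k = P at *
        omega
      have hIH1 := ih C a haC hfree_a (by omega)
      have hbC : a + 2 ^ k ∉ C := by
        intro hmem
        refine hfree _ hmem (by omega) ?_
        generalize (2:ℕ) ^ (k+1) = Q at *
        generalize (2:ℕ) ^ k = P at *
        omega
      have hbD : a + 2 ^ k ∉ C ∪ Dset k a := by
        intro hmem
        rcases Finset.mem_union.mp hmem with h | h
        · exact hbC h
        · have := mem_Dset h
          generalize (2:ℕ) ^ k = P at *
          omega
      have hbm1 : a + 2 ^ k - 1 ∈ C ∪ Dset k a := by
        rcases Nat.eq_zero_or_pos k with rfl | hk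
        · exact Finset.mem_union_left _ (by simpa using haC)
        · exact Finset.mem_union_right _ (top_mem_Dset hk)
      have hsum : a + 2 ^ k - 1 + 1 = a + 2 ^ k := by
        generalize (2:ℕ) ^ k = P at *
        omega
      have hcardD : (C ∪ Dset k a).card ≤ C.card + k :=
        le_trans (Finset.card_union_le _ _) (by have := card_Dset k a; omega)
      have hplace : PStep p (C ∪ Dset k a) (insert (a + 2 ^ k) (C ∪ Dset k a)) := by
        refine Or.inl ⟨a + 2 ^ k - 1, hbm1, ?_, by omega, ?_⟩
        · rw [hsum]; exact hbD
        · rw [hsum]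
      have hremove : PStep p (insert (a + 2 ^ k) (C ∪ Dset k a)) (C ∪ Dset k a) := by
        refine Or.inr ⟨a + 2 ^ k - 1, Finset.mem_insert_of_mem hbm1, ?_, ?_⟩
        · rw [hsum]; exact Finset.mem_insert_self _ _
        · rw [hsum, Finset.erase_insert hbD]
      have hIH2 := ih (insert (a + 2 ^ k) C) a (Finset.mem_insert_of_mem haC)
        (by
          intro x hx h3 h4
          rcases Finset.mem_insert.mp hx with rfl | hx'
          · generalize (2:ℕ) ^ k = P at *
            omega
          · exact hfree_a x hx' h3 h4)
        (by have := Finset.card_insert_le (a + 2 ^ k) C; omega)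
      have hIH3 := ih (insert (a + 2 ^ k) C) (a + 2 ^ k) (Finset.mem_insert_self _ _)
        (by
          intro x hx h3 h4
          rcases Finset.mem_insert.mp hx with rfl | hx'
          · omega
          · refine hfree x hx' (by omega) ?_
            generalize (2:ℕ) ^ (k+1) = Q at *
            generalize (2:ℕ) ^ k = P at *
            omega)
        (by have := Finset.card_insert_le (a + 2 ^ k) C; omega)
      have e1 : insert (a + 2 ^ k) (C ∪ Dset k a) = insert (a + 2 ^ k) C ∪ Dset k a := by
        rw [Finset.insert_union]
      have e2 : insert (a + 2 ^ k) C ∪ Dset k (a + 2 ^ k) = C ∪ Dset (k+1) a := by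
        rw [Dset_succ, Finset.insert_union, Finset.union_insert]
      constructor
      · refine hIH1.1.trans (Relation.ReflTransGen.single hplace |>.trans ?_)
        rw [e1, ← e2]
        exact hIH2.2.trans hIH3.1
      · rw [← e2]
        refine hIH3.2.trans ?_
        have h5 := hIH2.1
        rw [← e1] at h5
        exact h5.trans (Relation.ReflTransGen.single hremove |>.trans hIH1.2)

lemma pebinv_preach {p : ℕ} {C D : Finset ℕ} (hI : PebInv p C) (hr : PReach p C D) :
    PebInv p D := by
  induction hr with
  | refl => exact hI
  | tail _ hstep ih => exact (main_induction p).2 _ _ ih hstep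

/-- Space-irreversibility trade-off, part (i): the reversible pebble game of
length `2 ^ n - 1` (no erasures) can be won with `n` pebbles but not with
`n - 1` pebbles. -/
theorem pebble_game_tight (n : ℕ) (hn : 1 ≤ n) :
    (∃ C : Finset ℕ, EReach n C 0 ∧ 2 ^ n - 1 ∈ C) ∧
    ¬ ∃ C : Finset ℕ, EReach (n - 1) C 0 ∧ 2 ^ n - 1 ∈ C := by
  constructor
  · have hfree : ∀ x ∈ ({0} : Finset ℕ), 0 < x → x ≤ 0 + 2 ^ n - 1 → False := by
      intro x hx h1 _
      rw [Finset.mem_singleton] at hx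
      omega
    have hcard : ({0} : Finset ℕ).card + n ≤ n + 1 := by simp; omega
    obtain ⟨fwd, _⟩ := updown n n {0} 0 (Finset.mem_singleton_self 0) hfree hcard
    refine ⟨{0} ∪ Dset n 0, preach_to_ereach fwd, Finset.mem_union_right _ ?_⟩
    refine Finset.mem_image.mpr ⟨0, Finset.mem_range.mpr (by omega), ?_⟩
    norm_num
  · rintro ⟨C, hE, hmem⟩
    have hr : PReach (n - 1) {0} C := ereach_to_preach hE rfl
    have hI : PebInv (n - 1) C := pebinv_preach (pebinv_singleton (n - 1)) hr
    have hb := (main_induction (n - 1)).1 C hI _ hmem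
    obtain ⟨m, rfl⟩ : ∃ m, n = m + 1 := ⟨n - 1, by omega⟩
    have hps : (2:ℕ) ^ (m + 1) = 2 ^ m + 2 ^ m := by rw [pow_succ]; omega
    have h1 : 1 ≤ (2:ℕ) ^ m := Nat.one_le_two_pow
    simp only [Nat.add_sub_cancel] at hb
    generalize (2:ℕ) ^ (m + 1) = Q at *
    generalize (2:ℕ) ^ m = P at *
    omega
end

section
/- Monotonicity of solvability under game moves: adding a pebble to a weakly solvable configuration (by a legal placement) yields a weakly solvable configuration, and removing a pebble from a strongly solvable configuration (by a legal removal) yields a strongly solvable configuration. -/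
/-- A placed pebble `x` is *available* in configuration `P` (placed pebbles on
nodes `≥ 1`, node `0` permanently pebbled, `n` total movable pebbles, hence
`n - P.card` free pebbles) if another pebble is at most `2 ^ (n - P.card)`
positions to its left. -/
def Available (n : ℕ) (P : Finset ℕ) (x : ℕ) : Prop :=
  x ∈ P ∧ ∃ q ∈ insert 0 (P.erase x), q < x ∧ x ≤ q + 2 ^ (n - P.card)

/-- One removal of an available pebble. -/
def RemStep (n : ℕ) (P Q : Finset ℕ) : Prop :=
  ∃ x, Available n P x ∧ Q = P.erase x

/-- Some sequence of removals of available pebbles frees all pebbles. -/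
def WeaklySolvable (n : ℕ) (P : Finset ℕ) : Prop :=
  Relation.ReflTransGen (RemStep n) P ∅

/-- Every maximal sequence of removals of available pebbles empties the board. -/
def StronglySolvable (n : ℕ) (P : Finset ℕ) : Prop :=
  ∀ Q, Relation.ReflTransGen (RemStep n) P Q → (∀ R, ¬ RemStep n Q R) → Q = ∅

/-- Monotonicity of solvability under the game moves: a legal placement (a
free pebble put on unoccupied node `i+1` with node `i` occupied) preserves weak
solvability, and a legal removal (of the pebble on node `i+1`, node `i`
occupied) preserves strong solvability. -/
theorem solvability_monotone :
    (∀ (n : ℕ) (P : Finset ℕ) (i : ℕ), 0 ∉ P → P.card < n →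
      i ∈ insert 0 P → i + 1 ∉ P →
      WeaklySolvable n P → WeaklySolvable n (insert (i + 1) P)) ∧
    (∀ (n : ℕ) (P : Finset ℕ) (i : ℕ), 0 ∉ P →
      i ∈ insert 0 P → i + 1 ∈ P →
      StronglySolvable n P → StronglySolvable n (P.erase (i + 1))) := by
  constructor
  · intro n P i h0 hcard hi hni hws
    refine Relation.ReflTransGen.head ⟨i + 1, ⟨Finset.mem_insert_self _ _, i, ?_, ?_, ?_⟩, ?_⟩ hws
    · rw [Finset.erase_insert hni]; exact hi
    · omega
    · have := Nat.one_le_two_pow (n := n - (insert (i + 1) P).card); omega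
    · rw [Finset.erase_insert hni]
  · intro n P i h0 hi hip hss Q hreach hmax
    apply hss Q _ hmax
    refine Relation.ReflTransGen.head ⟨i + 1, ⟨hip, i, ?_, ?_, ?_⟩, rfl⟩ hreach
    · simp only [Finset.mem_insert, Finset.mem_erase] at hi ⊢
      rcases hi with h | h
      · exact Or.inl h
      · exact Or.inr ⟨by omega, h⟩
    · omega
    · have := Nat.one_le_two_pow (n := n - P.card); omega
end

section
/- Strict cost of removing one pebble: for n ≥ 1, a game of length 2^n - 1 winnable with n pebbles and zero erasures requires at least one erasure when only n-1 pebbles are available; i.e., B^{(n-1)S}(x,y) > B^{nS}(x,y) is instantiated as: no erasure-free winning play of the length-(2^n - 1) pebble game exists with n-1 pebbles. -/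
/-- Realizable configurations: built by inserting elements one at a time,
each within distance `2^(p - card)` above some existing element. -/
inductive Realz (p : ℕ) : Finset ℕ → Prop where
  | base : Realz p {0}
  | ins {C : Finset ℕ} {x b : ℕ} : Realz p C → x ∉ C → b ∈ C → b < x →
      x ≤ b + 2 ^ (p - C.card) → C.card ≤ p → Realz p (insert x C)

lemma Realz.card_pos {p : ℕ} {C : Finset ℕ} (h : Realz p C) : 1 ≤ C.card := by
  induction h with
  | base => simp
  | ins h hx hb hlt hs hc ih => rw [Finset.card_insert_of_notMem hx]; omega

lemma Realz.delete {p : ℕ} {D : Finset ℕ} (h : Realz p D) :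
    ∀ {w b : ℕ}, w ∈ D → b ∈ D → b < w → w ≤ b + 2 ^ (p - (D.card - 1)) →
      Realz p (D.erase w) := by
  induction h with
  | base =>
    intro w b hw hb hlt _
    simp only [Finset.mem_singleton] at hw hb; omega
  | @ins C x b0 hC hx hb0 hlt0 hs0 hc0 ih =>
    intro w b hw hb hlt hspan
    have hcardD : (insert x C).card = C.card + 1 := Finset.card_insert_of_notMem hx
    have hc1 : 1 ≤ C.card := hC.card_pos
    rw [hcardD] at hspan
    simp only [Nat.add_sub_cancel] at hspan
    by_cases hwx : w = x
    · subst hwx; rw [Finset.erase_insert hx]; exact hC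
    · have hwC : w ∈ C := by
        rcases Finset.mem_insert.mp hw with h' | h' 
        · exact absurd h' hwx
        · exact h'
      have hexp : p - (C.card - 1) = p - C.card + 1 := by omega
      have hpow2 : 2 ^ (p - C.card) + 2 ^ (p - C.card) = 2 ^ (p - (C.card - 1)) := by
        rw [hexp, pow_succ]; ring
      -- show Realz p (C.erase w)
      have hCe : Realz p (C.erase w) := by
        by_cases hbx : b = x
        · subst hbx
          exact ih hwC hb0 (lt_trans hlt0 hlt) (by omega)
        · have hbC : b ∈ C := by
            rcases Finset.mem_insert.mp hb with h' | h'
            · exact absurd h' hbx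
            · exact h'
          refine ih hwC hbC hlt ?_
          have : (2:ℕ) ^ (p - C.card) ≤ 2 ^ (p - (C.card - 1)) :=
            Nat.pow_le_pow_right (by norm_num) (by omega)
          omega
      have hgoal : (insert x C).erase w = insert x (C.erase w) := by
        rw [Finset.erase_insert_of_ne (Ne.symm hwx)]
      rw [hgoal]
      have hcarde : (C.erase w).card = C.card - 1 := Finset.card_erase_of_mem hwC
      by_cases hbw : b0 = w
      · subst hbw
        -- b0 = w removed; use b (b < w = b0 < x, so b ≠ x, b ∈ C)
        have hbx : b ≠ x := by omega
        have hbC : b ∈ C := by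
          rcases Finset.mem_insert.mp hb with h' | h'
          · exact absurd h' hbx
          · exact h'
        refine Realz.ins hCe (fun hmem => hx (Finset.mem_of_mem_erase hmem))
          (Finset.mem_erase.mpr ⟨by omega, hbC⟩) (by omega) ?_ (by omega)
        rw [hcarde]
        -- hspan : w ≤ b + 2^(p - C.card)
        omega
      · refine Realz.ins hCe (fun hmem => hx (Finset.mem_of_mem_erase hmem))
          (Finset.mem_erase.mpr ⟨hbw, hb0⟩) hlt0 ?_ (by omega)
        rw [hcarde]
        have : (2:ℕ) ^ (p - C.card) ≤ 2 ^ (p - (C.card - 1)) :=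
          Nat.pow_le_pow_right (by norm_num) (by omega)
        omega

lemma Realz.bound {p : ℕ} {C : Finset ℕ} (h : Realz p C) :
    ∀ {x : ℕ}, x ∈ C → x + 2 ^ (p - (C.card - 1)) ≤ 2 ^ p := by
  induction h with
  | base =>
    intro x hx
    simp only [Finset.mem_singleton] at hx
    subst hx
    simp
  | @ins C x0 b0 hC hx0 hb0 hlt0 hs0 hc0 ih =>
    intro x hx
    have hc1 : 1 ≤ C.card := hC.card_pos
    have hcardD : (insert x0 C).card = C.card + 1 := Finset.card_insert_of_notMem hx0
    rw [hcardD]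
    simp only [Nat.add_sub_cancel]
    have hexp : p - (C.card - 1) = p - C.card + 1 := by omega
    have hpow2 : 2 ^ (p - C.card) + 2 ^ (p - C.card) = 2 ^ (p - (C.card - 1)) := by
      rw [hexp, pow_succ]; ring
    rcases Finset.mem_insert.mp hx with h' | h'
    · subst h'
      have := ih hb0
      omega
    · have := ih h'
      have hmono : (2:ℕ) ^ (p - C.card) ≤ 2 ^ (p - (C.card - 1)) :=
        Nat.pow_le_pow_right (by norm_num) (by omega)
      omega

lemma ereach_realz {p : ℕ} {C : Finset ℕ} {e : ℕ} (h : EReach p C e) (he : e = 0) :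
    Realz p C := by
  induction h with
  | init => exact Realz.base
  | @place C e i h hi hni hcard ih =>
    exact Realz.ins (ih he) hni hi (by omega)
      (by have := Nat.one_le_two_pow (n := p - C.card); omega) hcard
  | @remove C e i h hi hi1 ih =>
    exact (ih he).delete hi1 hi (by omega)
      (by have := Nat.one_le_two_pow (n := p - (C.card - 1)); omega)
  | @erase C e i h hi h2 hni ih => omega

/-- Clean (reversible) placement at distance `2^k` using `k+1` free pebbles. -/
lemma clean_place (p : ℕ) : ∀ (k a : ℕ) (C : Finset ℕ) (e : ℕ), a ∈ C →
    C.card + k + 1 ≤ p + 1 → (∀ j, a < j → j ≤ a + 2 ^ k → j ∉ C) →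
    (EReach p C e → EReach p (insert (a + 2 ^ k) C) e) ∧
    (EReach p (insert (a + 2 ^ k) C) e → EReach p C e) := by
  intro k
  induction k with
  | zero =>
    intro a C e ha hcard hgap
    constructor
    · intro h
      have : a + 2 ^ 0 = a + 1 := by norm_num
      rw [this]
      exact EReach.place h ha (hgap (a + 1) (by omega) (by norm_num)) (by omega)
    · intro h
      have h1 : a + 2 ^ 0 = a + 1 := by norm_num
      rw [h1] at h
      have hrem := EReach.remove h (Finset.mem_insert_of_mem ha) (Finset.mem_insert_self _ _)
      rwa [Finset.erase_insert (hgap (a + 1) (by omega) (by norm_num))] at hrem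
  | succ k ih =>
    intro a C e ha hcard hgap
    have hpow : (2:ℕ) ^ (k + 1) = 2 ^ k + 2 ^ k := by rw [pow_succ]; ring
    have hone : 1 ≤ (2:ℕ) ^ k := Nat.one_le_two_pow
    set mid := a + 2 ^ k with hmid
    have hmidC : mid ∉ C := hgap mid (by omega) (by omega)
    have hfar : a + 2 ^ (k + 1) = mid + 2 ^ k := by omega
    have hfarC : a + 2 ^ (k + 1) ∉ C := hgap _ (by omega) (by omega)
    have hfarne : a + 2 ^ (k + 1) ≠ mid := by omega
    have hcardmid : (insert mid C).card = C.card + 1 := Finset.card_insert_of_notMem hmidC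
    have hcardfar : (insert (a + 2 ^ (k+1)) C).card = C.card + 1 :=
      Finset.card_insert_of_notMem hfarC
    -- step 1 : C ↔ insert mid C
    have S1 := ih a C e ha (by omega) (fun j hj1 hj2 => hgap j hj1 (by omega))
    -- step 2 : insert mid C ↔ insert (mid + 2^k) (insert mid C)
    have S2 := ih mid (insert mid C) e (Finset.mem_insert_self _ _) (by omega)
      (fun j hj1 hj2 => by
        intro hmem
        rcases Finset.mem_insert.mp hmem with h' | h'
        · omega
        · exact hgap j (by omega) (by omega) h')
    -- step 3 : insert far C ↔ insert mid (insert far C)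
    have S3 := ih a (insert (a + 2 ^ (k+1)) C) e (Finset.mem_insert_of_mem ha) (by omega)
      (fun j hj1 hj2 => by
        intro hmem
        rcases Finset.mem_insert.mp hmem with h' | h'
        · omega
        · exact hgap j (by omega) (by omega) h')
    have hcomm : insert (mid + 2 ^ k) (insert mid C)
        = insert mid (insert (a + 2 ^ (k+1)) C) := by
      rw [← hfar]; exact Finset.insert_comm _ _ _
    constructor
    · intro h
      have h1 := S1.1 h
      have h2 := S2.1 h1
      rw [hcomm] at h2
      have h3 := S3.2 h2
      exact h3
    · intro h
      have h1 := S3.1 h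
      rw [← hcomm] at h1
      have h2 := S2.2 h1
      exact S1.2 h2

lemma touch (p : ℕ) : ∀ (k a : ℕ) (C : Finset ℕ) (e : ℕ), a ∈ C →
    C.card + k ≤ p + 1 → (∀ j, a < j → j ≤ a + (2 ^ k - 1) → j ∉ C) →
    EReach p C e → ∃ D : Finset ℕ, EReach p D e ∧ a + (2 ^ k - 1) ∈ D := by
  intro k
  induction k with
  | zero =>
    intro a C e ha _ _ h
    exact ⟨C, h, by simpa using ha⟩
  | succ k ih =>
    intro a C e ha hcard hgap h
    have hpow : (2:ℕ) ^ (k + 1) = 2 ^ k + 2 ^ k := by rw [pow_succ]; ring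
    have hone : 1 ≤ (2:ℕ) ^ k := Nat.one_le_two_pow
    set mid := a + 2 ^ k with hmid
    have hmidC : mid ∉ C := hgap mid (by omega) (by omega)
    have h1 := (clean_place p k a C e ha (by omega)
      (fun j hj1 hj2 => hgap j hj1 (by omega))).1 h
    have hcardmid : (insert mid C).card = C.card + 1 := Finset.card_insert_of_notMem hmidC
    obtain ⟨D, hD, hmem⟩ := ih mid (insert mid C) e (Finset.mem_insert_self _ _) (by omega)
      (fun j hj1 hj2 => by
        intro hmem
        rcases Finset.mem_insert.mp hmem with h' | h'
        · omega
        · exact hgap j (by omega) (by omega) h') h1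
    exact ⟨D, hD, by
      have : mid + (2 ^ k - 1) = a + (2 ^ (k+1) - 1) := by omega
      rwa [this] at hmem⟩

/-- Strict cost of removing one pebble: for `n ≥ 1` the game of length
`2 ^ n - 1` is winnable with `n` pebbles and zero erasures, but every winning
play with only `n - 1` pebbles uses at least one erasure (in particular no
erasure-free winning play with `n - 1` pebbles exists). -/
theorem one_fewer_pebble_needs_erasure (n : ℕ) (hn : 1 ≤ n) :
    (∃ C : Finset ℕ, EReach n C 0 ∧ 2 ^ n - 1 ∈ C) ∧
    (∀ (C : Finset ℕ) (e : ℕ), EReach (n - 1) C e → 2 ^ n - 1 ∈ C → 1 ≤ e) := by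
  constructor
  · obtain ⟨D, hD, hmem⟩ := touch n n 0 {0} 0 (Finset.mem_singleton_self 0)
      (by simp; omega) (fun j hj1 _ => by simp; omega) EReach.init
    exact ⟨D, hD, by simpa using hmem⟩
  · intro C e h hmem
    rcases Nat.eq_zero_or_pos e with he | he
    · exfalso
      have hr := ereach_realz h he
      have hb := hr.bound hmem
      have h1 : (1:ℕ) ≤ 2 ^ ((n-1) - (C.card - 1)) := Nat.one_le_two_pow
      have h2 : (2:ℕ) ^ (n - 1) < 2 ^ n := Nat.pow_lt_pow_right (by norm_num) (by omega)
      have h3 : (1:ℕ) ≤ 2 ^ n := Nat.one_le_two_pow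
      omega
    · omega
end
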